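/- arXiv:1910.09002 — 13 statements merged into one kernel-verified Lean document; each statement's English description precedes it below -/
import Mathlib

section
/- Let (G, p) be a finite critical net in ℝ^k satisfying the balance condition. Then the degree of every interior vertex is at most the number of leaves: for every vertex x of G of degree ≥ 2, deg_G(x) ≤ |∂X|. -/
/-!
Fix a direction `v`. The numbers `⟪u_{zy}, v⟫`, where `u_{zy}` is the unit vector from `p y` to
`p z` along an edge, form an antisymmetric flow that is conserved at interior vertices (the balance
condition) and runs downhill for the height `⟪p ·, v⟫`. Cutting the net along the interior vertices
at least as high as `x` bounds the flow leaving `x` by the flow leaving the leaves; applied to `±v`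
this gives `∑_{y ~ x} |⟪u_{xy}, v⟫| ≤ ∑_l |⟪u_l, v⟫|`. Averaging over a standard Gaussian `v` turns
each `|⟪e, v⟫|` into `c ‖e‖` with `c > 0`, and all these vectors have norm one.
-/

open scoped RealInnerProductSpace
open Finset MeasureTheory ProbabilityTheory

section Gaussian

variable {E : Type*} [NormedAddCommGroup E] [InnerProductSpace ℝ E] [FiniteDimensional ℝ E]
  [MeasurableSpace E] [BorelSpace E]

lemma integrable_abs_inner_stdGaussian (e : E) :
    Integrable (fun v => |⟪e, v⟫|) (stdGaussian E) :=
  (IsGaussian.integrable_dual _ (innerSL ℝ e)).abs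

lemma stdGaussian_map_inner (e : E) :
    (stdGaussian E).map (⟪e, ·⟫) = (gaussianReal 0 1).map (‖e‖ * ·) := by
  have h := IsGaussian.map_eq_gaussianReal (μ := stdGaussian E) (innerSL ℝ e)
  rw [integral_strongDual_stdGaussian, variance_dual_stdGaussian, innerSL_apply_norm] at h
  rw [gaussianReal_map_const_mul, mul_zero, mul_one]
  convert h using 2
  · ext; simp
  · exact (Real.toNNReal_of_nonneg (sq_nonneg _)).symm

lemma integral_abs_inner_stdGaussian (e : E) :
    ∫ v, |⟪e, v⟫| ∂stdGaussian E = ‖e‖ * ∫ t, |t| ∂gaussianReal 0 1 := by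
  have hmap := congrArg (fun μ => ∫ t, |t| ∂μ) (stdGaussian_map_inner e)
  rw [integral_map (by fun_prop) (by fun_prop), integral_map (by fun_prop) (by fun_prop)] at hmap
  simp_rw [hmap, abs_mul, abs_norm]
  exact integral_const_mul _ _

lemma integral_abs_gaussianReal_pos : 0 < ∫ t, |t| ∂gaussianReal 0 1 := by
  refine (integral_nonneg fun _ => abs_nonneg _).lt_of_ne' fun h => ?_
  rw [integral_eq_zero_iff_of_nonneg (f := fun t : ℝ => |t|) (fun _ => abs_nonneg _)
    IsGaussian.integrable_id.abs] at h
  have hvar := variance_congr (X := id) (Y := 0) (by filter_upwards [h] with t ht; simpa using ht)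
  rw [variance_id_gaussianReal, variance_zero] at hvar
  exact one_ne_zero hvar

theorem sum_norm_le_sum_norm_of_sum_abs_inner_le {ι κ : Type*} {s : Finset ι} {t : Finset κ}
    {a : ι → E} {b : κ → E} (h : ∀ v, ∑ i ∈ s, |⟪a i, v⟫| ≤ ∑ j ∈ t, |⟪b j, v⟫|) :
    ∑ i ∈ s, ‖a i‖ ≤ ∑ j ∈ t, ‖b j‖ := by
  have hint := integral_mono
    (integrable_finsetSum s fun i _ => integrable_abs_inner_stdGaussian (a i))
    (integrable_finsetSum t fun j _ => integrable_abs_inner_stdGaussian (b j)) h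
  simp only [integral_finsetSum _ (fun i _ => integrable_abs_inner_stdGaussian _),
    integral_abs_inner_stdGaussian, ← sum_mul] at hint
  exact le_of_mul_le_mul_right hint integral_abs_gaussianReal_pos

end Gaussian

section Flow

variable {ι : Type*} [Fintype ι] [DecidableEq ι]

lemma sum_sum_compl_eq_zero_of_antisymm (f : ι → ι → ℝ) (hf : ∀ i j, f j i = -f i j)
    (S : Finset ι) (hS : ∀ i ∈ S, ∑ j, f i j = 0) : ∑ i ∈ S, ∑ j ∈ Sᶜ, f i j = 0 := by
  have hinner : ∑ i ∈ S, ∑ j ∈ S, f i j = 0 := by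
    have h : ∑ i ∈ S, ∑ j ∈ S, f i j = ∑ i ∈ S, ∑ j ∈ S, -f i j := calc
      _ = ∑ i ∈ S, ∑ j ∈ S, f j i := sum_comm
      _ = _ := sum_congr rfl fun i _ => sum_congr rfl fun j _ => hf i j
    simp only [sum_neg_distrib] at h
    linarith
  calc ∑ i ∈ S, ∑ j ∈ Sᶜ, f i j = ∑ i ∈ S, ∑ j, f i j - ∑ i ∈ S, ∑ j ∈ S, f i j := by
        simp only [← sum_add_sum_compl S, sum_add_distrib]; ring
    _ = 0 := by rw [sum_eq_zero hS, hinner, sub_zero]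

lemma sum_sum_compl_posPart_eq (f : ι → ι → ℝ) (hf : ∀ i j, f j i = -f i j)
    (S : Finset ι) (hS : ∀ i ∈ S, ∑ j, f i j = 0) :
    ∑ i ∈ S, ∑ j ∈ Sᶜ, (f i j)⁺ = ∑ i ∈ S, ∑ j ∈ Sᶜ, (f j i)⁺ := by
  have hsplit : ∀ i j, f i j = (f i j)⁺ - (f j i)⁺ := fun i j => by
    rw [hf i j, posPart_neg, posPart_sub_negPart]
  have h := sum_sum_compl_eq_zero_of_antisymm f hf S hS
  rw [sum_congr rfl fun i _ => sum_congr rfl fun j _ => hsplit i j] at h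
  simp only [sum_sub_distrib] at h
  linarith

theorem sum_posPart_le_sum_sum_posPart (F : ι → ι → ℝ) (φ : ι → ℝ) (B : Finset ι)
    (hanti : ∀ i j, F j i = -F i j) (hdown : ∀ i j, φ j ≤ φ i → 0 ≤ F i j)
    (hbal : ∀ i ∉ B, ∑ j, F i j = 0) {x : ι} (hx : x ∉ B) :
    ∑ j, (F x j)⁺ ≤ ∑ i ∈ B, ∑ j, (F i j)⁺ := by
  have hup : ∀ i j, φ i ≤ φ j → (F i j)⁺ = 0 := fun i j h => by
    rw [posPart_eq_zero, ← neg_nonneg, ← hanti]; exact hdown j i h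
  set S := univ.filter fun i => i ∉ B ∧ φ x ≤ φ i
  have hxS : x ∈ S := by simp [S, hx]
  have hout : ∑ j, (F x j)⁺ ≤ ∑ i ∈ S, ∑ j ∈ Sᶜ, (F i j)⁺ := calc
    ∑ j, (F x j)⁺ = ∑ j ∈ Sᶜ, (F x j)⁺ := by
      rw [← sum_add_sum_compl S, sum_eq_zero fun j hj => hup x j (mem_filter.1 hj).2.2, zero_add]
    _ ≤ ∑ i ∈ S, ∑ j ∈ Sᶜ, (F i j)⁺ :=
      single_le_sum (f := fun i => ∑ j ∈ Sᶜ, (F i j)⁺)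
        (fun i _ => sum_nonneg fun _ _ => posPart_nonneg _) hxS
  have hin : ∑ i ∈ S, ∑ j ∈ Sᶜ, (F j i)⁺ ≤ ∑ i ∈ B, ∑ j, (F i j)⁺ := calc
    ∑ i ∈ S, ∑ j ∈ Sᶜ, (F j i)⁺ = ∑ j ∈ Sᶜ ∩ B, ∑ i ∈ S, (F j i)⁺ := by
      rw [sum_comm, ← sum_filter_add_sum_filter_not Sᶜ (· ∈ B), filter_mem_eq_inter]
      refine add_eq_left.2 (sum_eq_zero fun j hj => sum_eq_zero fun i hi => hup j i ?_)
      simp only [S, mem_filter, mem_compl, mem_univ, true_and, not_and, not_le] at hj hi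
      exact ((hj.1 hj.2).le.trans hi.2)
    _ ≤ ∑ j ∈ Sᶜ ∩ B, ∑ i, (F j i)⁺ :=
      sum_le_sum fun j _ => sum_le_univ_sum_of_nonneg fun _ => posPart_nonneg _
    _ ≤ ∑ j ∈ B, ∑ i, (F j i)⁺ :=
      sum_le_sum_of_subset_of_nonneg inter_subset_right
        fun _ _ _ => sum_nonneg fun _ _ => posPart_nonneg _
  linarith [sum_sum_compl_posPart_eq F hanti S fun i hi => hbal i (mem_filter.1 hi).2.1]

theorem sum_abs_le_sum_sum_abs (F : ι → ι → ℝ) (φ : ι → ℝ) (B : Finset ι)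
    (hanti : ∀ i j, F j i = -F i j) (hdown : ∀ i j, φ j ≤ φ i → 0 ≤ F i j)
    (hbal : ∀ i ∉ B, ∑ j, F i j = 0) {x : ι} (hx : x ∉ B) :
    ∑ j, |F x j| ≤ ∑ i ∈ B, ∑ j, |F i j| := by
  have hpos := sum_posPart_le_sum_sum_posPart F φ B hanti hdown hbal hx
  have hneg := sum_posPart_le_sum_sum_posPart (-F) (-φ) B
    (fun i j => by simp [hanti i j])
    (fun i j h => by simpa [hanti i j] using hdown j i (neg_le_neg_iff.1 h))
    (fun i hi => by simp [hbal i hi]) hx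
  simp only [Pi.neg_apply, posPart_neg] at hneg
  simp only [← posPart_add_negPart, sum_add_distrib]
  linarith

end Flow

section Net

variable {E : Type*} [NormedAddCommGroup E] [InnerProductSpace ℝ E] {V : Type*}

noncomputable def edgeDir (p : V → E) (z y : V) : E := ‖p z - p y‖⁻¹ • (p z - p y)

lemma edgeDir_swap (p : V → E) (z y : V) : edgeDir p y z = -edgeDir p z y := by
  rw [edgeDir, edgeDir, norm_sub_rev, ← smul_neg, neg_sub]

lemma inner_edgeDir_nonneg (p : V → E) {z y : V} {v : E} (h : ⟪p y, v⟫ ≤ ⟪p z, v⟫) :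
    0 ≤ ⟪edgeDir p z y, v⟫ := by
  rw [edgeDir, real_inner_smul_left, inner_sub_left]
  exact mul_nonneg (inv_nonneg.2 (norm_nonneg _)) (sub_nonneg.2 h)

lemma norm_edgeDir (p : V → E) {z y : V} (h : p z ≠ p y) : ‖edgeDir p z y‖ = 1 := by
  rw [edgeDir, norm_smul, norm_inv, norm_norm,
    inv_mul_cancel₀ (norm_ne_zero_iff.2 (sub_ne_zero.2 h))]

variable [Fintype V] (G : SimpleGraph V) [DecidableRel G.Adj] (p : V → E)

lemma sum_norm_edgeDir (hinj : Function.Injective p) (z : V) :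
    ∑ y ∈ G.neighborFinset z, ‖edgeDir p z y‖ = G.degree z := by
  rw [sum_congr rfl fun y hy => norm_edgeDir p <| hinj.ne <| G.ne_of_adj <|
    (G.mem_neighborFinset z y).1 hy, sum_const, G.card_neighborFinset_eq_degree, nsmul_one]

theorem sum_abs_inner_edgeDir_le_sum_leaves
    (hbal : ∀ z, 2 ≤ G.degree z → ∑ y ∈ G.neighborFinset z, edgeDir p z y = 0)
    {x : V} (hx : 2 ≤ G.degree x) (v : E) :
    ∑ y ∈ G.neighborFinset x, |⟪edgeDir p x y, v⟫| ≤
      ∑ l ∈ univ.filter (G.degree · = 1), ∑ y ∈ G.neighborFinset l, |⟪edgeDir p l y, v⟫| := by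
  classical
  let F z y := if G.Adj z y then ⟪edgeDir p z y, v⟫ else 0
  have hsum : ∀ (g : ℝ → ℝ) z, g 0 = 0 →
      ∑ y, g (F z y) = ∑ y ∈ G.neighborFinset z, g ⟪edgeDir p z y, v⟫ := fun g z hg => by
    simp only [F, apply_ite g, hg, ← sum_filter, G.neighborFinset_eq_filter]
  have hflow := sum_abs_le_sum_sum_abs F (⟪p ·, v⟫) (univ.filter (G.degree · = 1))
    (fun z y => by
      simp only [F, G.adj_comm y z, edgeDir_swap p z y, inner_neg_left]
      split_ifs <;> simp)
    (fun z y h => by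
      simp only [F]
      split_ifs
      exacts [inner_edgeDir_nonneg p h, le_rfl])
    (fun z hz => by
      rw [show ∑ y, F z y = ∑ y ∈ G.neighborFinset z, ⟪edgeDir p z y, v⟫ from hsum id z rfl,
        ← sum_inner]
      rcases Nat.lt_or_ge (G.degree z) 2 with h | h
      · have h0 : G.degree z = 0 := by simp only [mem_filter, mem_univ, true_and] at hz; omega
        rw [← G.card_neighborFinset_eq_degree, card_eq_zero] at h0
        simp [h0]
      · rw [hbal z h, inner_zero_left])
    (x := x) (by simp only [mem_filter, mem_univ, true_and]; omega)
  simpa only [hsum abs _ abs_zero] using hflow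

end Net

theorem degree_le_card_leaves_general
    {k : ℕ} {V : Type*} [Fintype V]
    (G : SimpleGraph V) [DecidableRel G.Adj]
    (p : V → EuclideanSpace ℝ (Fin k)) (hinj : Function.Injective p)
    (hbal : ∀ x : V, 2 ≤ G.degree x →
      ∑ y ∈ G.neighborFinset x, (‖p x - p y‖)⁻¹ • (p x - p y) = 0)
    (x : V) (hx : 2 ≤ G.degree x) :
    G.degree x ≤ (Finset.univ.filter fun l : V => G.degree l = 1).card := by
  have key := sum_norm_le_sum_norm_of_sum_abs_inner_le
    (s := G.neighborFinset x) (a := edgeDir p x)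
    (t := (univ.filter fun l : V => G.degree l = 1).sigma fun l => G.neighborFinset l)
    (b := fun d => edgeDir p d.1 d.2) fun v => by
      rw [sum_sigma]
      exact sum_abs_inner_edgeDir_le_sum_leaves G p hbal hx v
  rw [sum_sigma, sum_norm_edgeDir G p hinj,
    sum_congr rfl fun l hl => by rw [sum_norm_edgeDir G p hinj, (mem_filter.1 hl).2]] at key
  simpa using key

/-- In a finite critical net in `ℝ^k` satisfying the balance condition,
the degree of every interior vertex (degree ≥ 2) is at most the number of leaves. -/
theorem degree_le_card_leaves
    {k : ℕ} (hk : 1 ≤ k) {V : Type*} [Fintype V] [DecidableEq V]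
    (G : SimpleGraph V) [DecidableRel G.Adj]
    (p : V → EuclideanSpace ℝ (Fin k)) (hinj : Function.Injective p)
    (hdeg1 : ∀ x : V, 1 ≤ G.degree x)
    (hnoLL : ∀ x y : V, G.Adj x y → ¬(G.degree x = 1 ∧ G.degree y = 1))
    (hbal : ∀ x : V, 2 ≤ G.degree x →
      ∑ y ∈ G.neighborFinset x, (‖p x - p y‖)⁻¹ • (p x - p y) = 0)
    (x : V) (hx : 2 ≤ G.degree x) :
    G.degree x ≤ (Finset.univ.filter fun l : V => G.degree l = 1).card :=
  degree_le_card_leaves_general G p hinj hbal x hx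
end

section
/- Let (G, p) be a finite critical net in ℝ^k satisfying the balance condition. Suppose c ∈ EuclideanSpace ℝ (Fin k) and r ≥ 0 are such that ‖p x − c‖ ≤ r for every interior vertex x. Then the interior length satisfies L ≤ r · |∂X|. -/
/-!
Test each edge against the position vector relative to `c`: put
`φ x y = ⟪u_{xy}, p x - c⟫`, where `u_{xy}` is the unit vector from `p y` to `p x`.
Balance makes `∑_{y ~ x} φ x y` vanish at every interior vertex, while
`φ x y + φ y x = ‖p x - p y‖` on every edge. Summing over interior vertices, the
interior length equals minus the sum of `φ x l` over the leaf edges `(x, l)`, and each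
such term is at least `-‖p x - c‖ ≥ -r`. Every leaf has exactly one such edge, since no
edge joins two leaves.
-/

open scoped RealInnerProductSpace
open Finset

section UnitVectors

variable {E : Type*} [NormedAddCommGroup E] [InnerProductSpace ℝ E]

theorem inner_inv_norm_smul_sub_add_inner_inv_norm_smul_sub (a b c : E) :
    ⟪‖a - b‖⁻¹ • (a - b), a - c⟫ + ⟪‖b - a‖⁻¹ • (b - a), b - c⟫ = ‖a - b‖ := by
  rw [norm_sub_rev b a, ← neg_sub a b, smul_neg, inner_neg_left, real_inner_smul_left,
    real_inner_smul_left, ← sub_eq_add_neg, ← mul_sub,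
    ← inner_sub_right, sub_sub_sub_cancel_right, real_inner_self_eq_norm_sq]
  rcases eq_or_ne ‖a - b‖ 0 with h | h
  · simp [h]
  · field_simp

theorem neg_norm_le_inner_inv_norm_smul (v w : E) : -‖w‖ ≤ ⟪‖v‖⁻¹ • v, w⟫ := by
  rcases eq_or_ne v 0 with rfl | hv
  · simp
  · have := neg_abs_le ⟪‖v‖⁻¹ • v, w⟫
    have := abs_real_inner_le_norm (‖v‖⁻¹ • v) w
    rw [norm_smul, norm_inv, norm_norm, inv_mul_cancel₀ (norm_ne_zero_iff.2 hv), one_mul] at this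
    linarith

end UnitVectors

namespace SimpleGraph

variable {V : Type*} [Fintype V] (G : SimpleGraph V) [DecidableRel G.Adj]
  (P Q : V → Prop) [DecidablePred P] [DecidablePred Q]

theorem sum_filter_sum_neighborFinset_filter_comm {M : Type*} [AddCommMonoid M]
    (f : V → V → M) :
    ∑ x ∈ univ.filter P, ∑ y ∈ (G.neighborFinset x).filter Q, f x y =
      ∑ y ∈ univ.filter Q, ∑ x ∈ (G.neighborFinset y).filter P, f x y :=
  sum_comm' fun x y => by
    simp only [mem_filter, mem_univ, true_and, mem_neighborFinset, adj_comm]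
    tauto

theorem two_mul_sum_filter_sum_neighborFinset_filter (f : V → V → ℝ) :
    2 * ∑ x ∈ univ.filter P, ∑ y ∈ (G.neighborFinset x).filter P, f x y =
      ∑ x ∈ univ.filter P, ∑ y ∈ (G.neighborFinset x).filter P, (f x y + f y x) := by
  simp only [sum_add_distrib, two_mul]
  rw [G.sum_filter_sum_neighborFinset_filter_comm P P fun x y => f y x]

theorem sum_filter_sum_neighborFinset_filter_le_of_sum_eq_zero (φ : V → V → ℝ) (r : ℝ)
    (hbal : ∀ x, P x → ∑ y ∈ G.neighborFinset x, φ x y = 0)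
    (hbound : ∀ x y, P x → G.Adj x y → ¬P y → -r ≤ φ x y) :
    ∑ x ∈ univ.filter P, ∑ y ∈ (G.neighborFinset x).filter P, φ x y ≤
      r * ∑ x ∈ univ.filter P, (#((G.neighborFinset x).filter fun y => ¬P y) : ℝ) := by
  rw [mul_sum]
  refine sum_le_sum fun x hx => ?_
  have hPx := (mem_filter.1 hx).2
  have hsplit := (sum_filter_add_sum_filter_not _ P (φ x)).trans (hbal x hPx)
  rw [eq_neg_of_add_eq_zero_left hsplit, neg_le, ← neg_mul, mul_comm, ← nsmul_eq_mul]
  refine card_nsmul_le_sum _ _ _ fun y hy => ?_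
  obtain ⟨hxy, hPy⟩ := mem_filter.1 hy
  exact hbound x y hPx ((G.mem_neighborFinset x y).1 hxy) hPy

theorem sum_card_leaf_neighbors_eq_card_leaves
    (hleaves : ∀ x y : V, G.Adj x y → ¬(G.degree x = 1 ∧ G.degree y = 1)) :
    ∑ x ∈ univ.filter (fun x => 2 ≤ G.degree x),
        #((G.neighborFinset x).filter fun y => ¬2 ≤ G.degree y) =
      #(univ.filter fun l => G.degree l = 1) := by
  have hcomm := G.sum_filter_sum_neighborFinset_filter_comm (fun x => 2 ≤ G.degree x)
    (fun y => ¬2 ≤ G.degree y) fun _ _ => 1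
  simp only [sum_const, smul_eq_mul, mul_one] at hcomm
  rw [hcomm, card_eq_sum_ones, sum_filter, sum_filter]
  refine sum_congr rfl fun y _ => ?_
  by_cases hy : 2 ≤ G.degree y
  · simp [hy, show G.degree y ≠ 1 by omega]
  · have hnbrs : (G.neighborFinset y).filter (fun x => 2 ≤ G.degree x) = G.neighborFinset y := by
      refine filter_true_of_mem fun x hx => ?_
      have hxy := (G.mem_neighborFinset y x).1 hx
      have := (G.degree_pos_iff_exists_adj x).2 ⟨y, hxy.symm⟩
      have := (G.degree_pos_iff_exists_adj y).2 ⟨x, hxy⟩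
      have := hleaves y x hxy
      omega
    rw [if_pos hy, hnbrs, card_neighborFinset_eq_degree]
    split_ifs <;> omega

end SimpleGraph

theorem interior_length_le_radius_mul_card_leaves_general
    {k : ℕ} {V : Type*} [Fintype V]
    (G : SimpleGraph V) [DecidableRel G.Adj]
    (p : V → EuclideanSpace ℝ (Fin k))
    (hnoLL : ∀ x y : V, G.Adj x y → ¬(G.degree x = 1 ∧ G.degree y = 1))
    (hbal : ∀ x : V, 2 ≤ G.degree x →
      ∑ y ∈ G.neighborFinset x, (‖p x - p y‖)⁻¹ • (p x - p y) = 0)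
    (c : EuclideanSpace ℝ (Fin k)) (r : ℝ)
    (hball : ∀ x : V, 2 ≤ G.degree x → ‖p x - c‖ ≤ r) :
    (1 / 2 : ℝ) *
        ∑ x ∈ Finset.univ.filter (fun x : V => 2 ≤ G.degree x),
          ∑ y ∈ (G.neighborFinset x).filter (fun y => 2 ≤ G.degree y), ‖p x - p y‖
      ≤ r * (Finset.univ.filter fun l : V => G.degree l = 1).card := by
  set φ : V → V → ℝ := fun x y => ⟪‖p x - p y‖⁻¹ • (p x - p y), p x - c⟫
  have hlength : ∑ x ∈ univ.filter (fun x => 2 ≤ G.degree x),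
        ∑ y ∈ (G.neighborFinset x).filter (fun y => 2 ≤ G.degree y), ‖p x - p y‖ =
      2 * ∑ x ∈ univ.filter (fun x => 2 ≤ G.degree x),
        ∑ y ∈ (G.neighborFinset x).filter (fun y => 2 ≤ G.degree y), φ x y := by
    rw [G.two_mul_sum_filter_sum_neighborFinset_filter]
    simp only [φ, inner_inv_norm_smul_sub_add_inner_inv_norm_smul_sub]
  rw [hlength, one_div, inv_mul_cancel_left₀ two_ne_zero,
    ← G.sum_card_leaf_neighbors_eq_card_leaves hnoLL, Nat.cast_sum]
  refine G.sum_filter_sum_neighborFinset_filter_le_of_sum_eq_zero _ φ r (fun x hx => ?_)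
    fun x y hx _ _ => (neg_le_neg (hball x hx)).trans (neg_norm_le_inner_inv_norm_smul _ _)
  simp only [φ, ← sum_inner, hbal x hx, inner_zero_left]

/-- In a finite critical net in `ℝ^k` satisfying the balance condition,
if all interior vertices lie in the ball of radius `r` around `c`, then the interior
length (the sum of `‖p x - p y‖` over the unordered edges with both endpoints interior,
written here as half the sum over ordered pairs) is at most `r · |∂X|`. -/
theorem interior_length_le_radius_mul_card_leaves
    {k : ℕ} (hk : 1 ≤ k) {V : Type*} [Fintype V] [DecidableEq V]
    (G : SimpleGraph V) [DecidableRel G.Adj]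
    (p : V → EuclideanSpace ℝ (Fin k)) (hinj : Function.Injective p)
    (hdeg1 : ∀ x : V, 1 ≤ G.degree x)
    (hnoLL : ∀ x y : V, G.Adj x y → ¬(G.degree x = 1 ∧ G.degree y = 1))
    (hbal : ∀ x : V, 2 ≤ G.degree x →
      ∑ y ∈ G.neighborFinset x, (‖p x - p y‖)⁻¹ • (p x - p y) = 0)
    (c : EuclideanSpace ℝ (Fin k)) (r : ℝ) (hr : 0 ≤ r)
    (hball : ∀ x : V, 2 ≤ G.degree x → ‖p x - c‖ ≤ r) :
    (1 / 2 : ℝ) *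
        ∑ x ∈ Finset.univ.filter (fun x : V => 2 ≤ G.degree x),
          ∑ y ∈ (G.neighborFinset x).filter (fun y => 2 ≤ G.degree y), ‖p x - p y‖
      ≤ r * (Finset.univ.filter fun l : V => G.degree l = 1).card :=
  interior_length_le_radius_mul_card_leaves_general G p hnoLL hbal c r hball
end

section
/- Let (G, p) be a finite critical net in ℝ^k satisfying the balance condition. Then the interior length equals the sum, over the leaves, of the inner product of the leaf vector with the position of the leaf's neighbour: L = ∑_{l ∈ ∂X} ⟪u_l, p (n_l)⟫. -/
/-!
For an edge `xy` with unit vector `u_xy = (p x - p y)/‖p x - p y‖` one has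
`‖p x - p y‖ = ⟪u_xy, p x⟫ + ⟪u_yx, p y⟫`. Summing over the interior edges, each interior vertex
`x` collects `⟪∑ u_xy, p x⟫` over its interior neighbours `y`; by the balance condition this equals
`⟪∑ u_lx, p x⟫` over its leaf neighbours `l`, and regrouping by leaves gives `∑_l ⟪u_l, p n_l⟫`.
-/

open scoped RealInnerProductSpace
open Finset

section UnitDir

variable {E : Type*} [NormedAddCommGroup E] [InnerProductSpace ℝ E]

/-- `unitDir a a = 0`, as `‖0‖⁻¹ = 0`. -/
noncomputable def unitDir (a b : E) : E := ‖a - b‖⁻¹ • (a - b)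

theorem unitDir_swap (a b : E) : unitDir b a = -unitDir a b := by
  rw [unitDir, unitDir, ← neg_sub a b, norm_neg, smul_neg]

theorem inner_unitDir_sub (a b : E) : ⟪unitDir a b, a - b⟫ = ‖a - b‖ := by
  rw [unitDir, real_inner_smul_left, real_inner_self_eq_norm_sq]
  rcases eq_or_ne ‖a - b‖ 0 with h | h
  · simp [h]
  · field_simp

theorem norm_sub_eq_inner_unitDir_add_inner_unitDir (a b : E) :
    ‖a - b‖ = ⟪unitDir a b, a⟫ + ⟪unitDir b a, b⟫ := by
  rw [unitDir_swap a b, inner_neg_left, ← sub_eq_add_neg, ← inner_sub_right, inner_unitDir_sub]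

end UnitDir

namespace SimpleGraph

variable {V : Type*} [Fintype V] (G : SimpleGraph V) [DecidableRel G.Adj]

theorem sum_sum_neighborFinset_filter_comm {M : Type*} [AddCommMonoid M] (P : V → Prop)
    [DecidablePred P] (f : V → V → M) :
    ∑ x ∈ univ.filter P, ∑ y ∈ (G.neighborFinset x).filter P, f x y
      = ∑ x ∈ univ.filter P, ∑ y ∈ (G.neighborFinset x).filter P, f y x :=
  Finset.sum_comm' fun x y => by
    simp only [mem_filter, mem_univ, true_and, mem_neighborFinset, G.adj_comm x y]
    tauto

theorem neighborFinset_eq_singleton_of_degree_eq_one {l m : V} (hl : G.degree l = 1)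
    (hm : G.Adj l m) : G.neighborFinset l = {m} := by
  obtain ⟨a, ha⟩ := card_eq_one.mp (by rwa [G.card_neighborFinset_eq_degree])
  have hm' : m ∈ G.neighborFinset l := (G.mem_neighborFinset l m).mpr hm
  rw [ha, mem_singleton] at hm'
  rw [ha, hm']

theorem sum_sum_neighborFinset_filter_leaves {M : Type*} [AddCommMonoid M] {Q : V → Prop}
    [DecidablePred Q] {t : Finset V} {n : V → V}
    (hn : ∀ l, Q l → G.neighborFinset l = {n l}) (ht : ∀ l, Q l → n l ∈ t) (f : V → V → M) :
    ∑ x ∈ t, ∑ y ∈ (G.neighborFinset x).filter Q, f x y = ∑ l ∈ univ.filter Q, f (n l) l := by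
  rw [Finset.sum_comm' (s' := fun l => {n l}) (t' := univ.filter Q)]
  · simp only [sum_singleton]
  · intro x y
    simp only [mem_filter, mem_univ, true_and, mem_neighborFinset, mem_singleton]
    constructor
    · rintro ⟨-, hxy, hy⟩
      refine ⟨?_, hy⟩
      rw [← mem_singleton, ← hn y hy, mem_neighborFinset]
      exact hxy.symm
    · rintro ⟨rfl, hy⟩
      have hadj : G.Adj y (n y) := by rw [← mem_neighborFinset, hn y hy]; exact mem_singleton_self _
      exact ⟨ht y hy, hadj.symm, hy⟩

variable {E : Type*} [NormedAddCommGroup E] [InnerProductSpace ℝ E]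

theorem sum_inner_unitDir_filter_eq_of_balanced {p : V → E} {x : V}
    (hbal : ∑ y ∈ G.neighborFinset x, unitDir (p x) (p y) = 0) (P : V → Prop) [DecidablePred P]
    (v : E) :
    ∑ y ∈ (G.neighborFinset x).filter P, ⟪unitDir (p x) (p y), v⟫
      = ∑ y ∈ (G.neighborFinset x).filter (¬P ·), ⟪unitDir (p y) (p x), v⟫ := by
  have htotal : ∑ y ∈ G.neighborFinset x, ⟪unitDir (p x) (p y), v⟫ = 0 := by
    rw [← sum_inner, hbal, inner_zero_left]
  rw [← sum_filter_add_sum_filter_not _ P] at htotal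
  simp only [unitDir_swap (p x), inner_neg_left, sum_neg_distrib]
  linarith

end SimpleGraph

theorem interior_length_eq_sum_leafvector_inner_neighbour_general
    {k : ℕ} {V : Type*} [Fintype V]
    (G : SimpleGraph V) [DecidableRel G.Adj]
    (p : V → EuclideanSpace ℝ (Fin k))
    (hdeg1 : ∀ x : V, 1 ≤ G.degree x)
    (hnoLL : ∀ x y : V, G.Adj x y → ¬(G.degree x = 1 ∧ G.degree y = 1))
    (hbal : ∀ x : V, 2 ≤ G.degree x →
      ∑ y ∈ G.neighborFinset x, (‖p x - p y‖)⁻¹ • (p x - p y) = 0)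
    (n : V → V) (hn : ∀ l : V, G.degree l = 1 → G.Adj l (n l)) :
    (1 / 2 : ℝ) *
        ∑ x ∈ Finset.univ.filter (fun x : V => 2 ≤ G.degree x),
          ∑ y ∈ (G.neighborFinset x).filter (fun y => 2 ≤ G.degree y), ‖p x - p y‖
      = ∑ l ∈ Finset.univ.filter (fun l : V => G.degree l = 1),
          ⟪(‖p l - p (n l)‖)⁻¹ • (p l - p (n l)), p (n l)⟫ := by
  have hnot_interior : ∀ x, ¬2 ≤ G.degree x ↔ G.degree x = 1 := fun x => by have := hdeg1 x; omega
  have hn_interior : ∀ l, G.degree l = 1 → n l ∈ univ.filter (fun x => 2 ≤ G.degree x) :=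
    fun l hl => mem_filter.mpr ⟨mem_univ _, by
      have := hnoLL l (n l) (hn l hl); have := hdeg1 (n l); omega⟩
  calc _ = (1 / 2 : ℝ) * ∑ x ∈ univ.filter (fun x => 2 ≤ G.degree x),
          ∑ y ∈ (G.neighborFinset x).filter (fun y => 2 ≤ G.degree y),
            (⟪unitDir (p x) (p y), p x⟫ + ⟪unitDir (p y) (p x), p y⟫) := by
        simp only [norm_sub_eq_inner_unitDir_add_inner_unitDir (p _)]
    _ = ∑ x ∈ univ.filter (fun x => 2 ≤ G.degree x),
          ∑ y ∈ (G.neighborFinset x).filter (fun y => 2 ≤ G.degree y),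
            ⟪unitDir (p x) (p y), p x⟫ := by
        simp only [sum_add_distrib]
        rw [G.sum_sum_neighborFinset_filter_comm _ fun x y => ⟪unitDir (p y) (p x), p y⟫]
        ring
    _ = ∑ x ∈ univ.filter (fun x => 2 ≤ G.degree x),
          ∑ y ∈ (G.neighborFinset x).filter (fun y => G.degree y = 1),
            ⟪unitDir (p y) (p x), p x⟫ := by
        refine sum_congr rfl fun x hx => ?_
        rw [G.sum_inner_unitDir_filter_eq_of_balanced (hbal x (mem_filter.mp hx).2)]
        exact sum_congr (filter_congr fun y _ => hnot_interior y) fun _ _ => rfl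
    _ = _ := G.sum_sum_neighborFinset_filter_leaves
          (fun l hl => G.neighborFinset_eq_singleton_of_degree_eq_one hl (hn l hl)) hn_interior _

/-- In a finite critical net in `ℝ^k` satisfying the balance condition,
the interior length equals the sum over the leaves of the inner product of the leaf
vector with the position of the leaf's neighbour. -/
theorem interior_length_eq_sum_leafvector_inner_neighbour
    {k : ℕ} (hk : 1 ≤ k) {V : Type*} [Fintype V] [DecidableEq V]
    (G : SimpleGraph V) [DecidableRel G.Adj]
    (p : V → EuclideanSpace ℝ (Fin k)) (hinj : Function.Injective p)
    (hdeg1 : ∀ x : V, 1 ≤ G.degree x)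
    (hnoLL : ∀ x y : V, G.Adj x y → ¬(G.degree x = 1 ∧ G.degree y = 1))
    (hbal : ∀ x : V, 2 ≤ G.degree x →
      ∑ y ∈ G.neighborFinset x, (‖p x - p y‖)⁻¹ • (p x - p y) = 0)
    (n : V → V) (hn : ∀ l : V, G.degree l = 1 → G.Adj l (n l)) :
    (1 / 2 : ℝ) *
        ∑ x ∈ Finset.univ.filter (fun x : V => 2 ≤ G.degree x),
          ∑ y ∈ (G.neighborFinset x).filter (fun y => 2 ≤ G.degree y), ‖p x - p y‖
      = ∑ l ∈ Finset.univ.filter (fun l : V => G.degree l = 1),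
          ⟪(‖p l - p (n l)‖)⁻¹ • (p l - p (n l)), p (n l)⟫ :=
  interior_length_eq_sum_leafvector_inner_neighbour_general G p hdeg1 hnoLL hbal n hn
end

section
/- Let (G, p) be a finite critical net in ℝ^k satisfying the balance condition. Then the sum of the leaf vectors vanishes: ∑_{l ∈ ∂X} u_l = 0. -/
/-!
The double sum, over all vertices `x` and neighbours `y` of `x`, of the unit vector from `y`
to `x` vanishes, because the two orientations of each edge cancel. Interior vertices
contribute zero to it by balance, and a leaf contributes exactly its leaf vector.
-/

namespace SimpleGraph

variable {V M : Type*} [AddCommGroup M] (G : SimpleGraph V)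

theorem sum_sum_neighborFinset_eq_zero_of_antisymm [Fintype V] [DecidableRel G.Adj]
    (f : V → V → M) (hf : ∀ x y, G.Adj x y → f y x = -f x y) :
    ∑ x, ∑ y ∈ G.neighborFinset x, f x y = 0 := by
  rw [Finset.sum_sigma']
  have hmem : ∀ q : Σ _ : V, V, q ∈ Finset.univ.sigma (G.neighborFinset ·) ↔ G.Adj q.1 q.2 := by
    simp
  refine Finset.sum_involution (fun q _ => ⟨q.2, q.1⟩) ?_ ?_ ?_ (fun _ _ => rfl)
  · rintro ⟨x, y⟩ hxy
    rw [hf x y ((hmem _).mp hxy), add_neg_cancel]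
  · rintro ⟨x, y⟩ hxy - hswap
    exact ((hmem _).mp hxy).ne (Sigma.mk.inj_iff.mp hswap).1.symm
  · exact fun q hq => (hmem _).mpr ((hmem q).mp hq).symm

theorem sum_neighborFinset_of_degree_eq_one {l m : V} [Fintype (G.neighborSet l)]
    (hl : G.degree l = 1) (hlm : G.Adj l m) (g : V → M) :
    ∑ y ∈ G.neighborFinset l, g y = g m := by
  obtain ⟨a, ha⟩ := Finset.card_eq_one.mp hl
  have hm : m ∈ G.neighborFinset l := (G.mem_neighborFinset l m).mpr hlm
  rw [ha, Finset.mem_singleton] at hm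
  rw [ha, Finset.sum_singleton, hm]

end SimpleGraph

theorem sum_leaf_vectors_eq_zero_general
    {k : ℕ} {V : Type*} [Fintype V]
    (G : SimpleGraph V) [DecidableRel G.Adj]
    (p : V → EuclideanSpace ℝ (Fin k))
    (hdeg1 : ∀ x : V, 1 ≤ G.degree x)
    (hbal : ∀ x : V, 2 ≤ G.degree x →
      ∑ y ∈ G.neighborFinset x, (‖p x - p y‖)⁻¹ • (p x - p y) = 0)
    (n : V → V) (hn : ∀ l : V, G.degree l = 1 → G.Adj l (n l)) :
    ∑ l ∈ Finset.univ.filter (fun l : V => G.degree l = 1),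
      (‖p l - p (n l)‖)⁻¹ • (p l - p (n l)) = 0 := by
  set u : V → V → EuclideanSpace ℝ (Fin k) := fun x y => (‖p x - p y‖)⁻¹ • (p x - p y)
  have hu : ∀ x y, G.Adj x y → u y x = -u x y := fun x y _ => by
    simp only [u, ← neg_sub (p x) (p y), norm_neg, smul_neg]
  calc ∑ l ∈ Finset.univ.filter (fun l : V => G.degree l = 1), u l (n l)
      = ∑ l ∈ Finset.univ.filter (fun l : V => G.degree l = 1),
          ∑ y ∈ G.neighborFinset l, u l y := by
        refine Finset.sum_congr rfl fun l hl => ?_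
        have hl : G.degree l = 1 := (Finset.mem_filter.mp hl).2
        exact (G.sum_neighborFinset_of_degree_eq_one hl (hn l hl) (u l)).symm
    _ = ∑ x, ∑ y ∈ G.neighborFinset x, u x y := by
        refine Finset.sum_subset (Finset.subset_univ _) fun x _ hx => hbal x ?_
        have := hdeg1 x
        simp only [Finset.mem_filter, Finset.mem_univ, true_and] at hx
        omega
    _ = 0 := G.sum_sum_neighborFinset_eq_zero_of_antisymm u hu

/-- In a finite critical net in `ℝ^k` satisfying the balance condition,
the sum of the leaf vectors vanishes. -/
theorem sum_leaf_vectors_eq_zero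
    {k : ℕ} (hk : 1 ≤ k) {V : Type*} [Fintype V] [DecidableEq V]
    (G : SimpleGraph V) [DecidableRel G.Adj]
    (p : V → EuclideanSpace ℝ (Fin k)) (hinj : Function.Injective p)
    (hdeg1 : ∀ x : V, 1 ≤ G.degree x)
    (hnoLL : ∀ x y : V, G.Adj x y → ¬(G.degree x = 1 ∧ G.degree y = 1))
    (hbal : ∀ x : V, 2 ≤ G.degree x →
      ∑ y ∈ G.neighborFinset x, (‖p x - p y‖)⁻¹ • (p x - p y) = 0)
    (n : V → V) (hn : ∀ l : V, G.degree l = 1 → G.Adj l (n l)) :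
    ∑ l ∈ Finset.univ.filter (fun l : V => G.degree l = 1),
      (‖p l - p (n l)‖)⁻¹ • (p l - p (n l)) = 0 :=
  sum_leaf_vectors_eq_zero_general G p hdeg1 hbal n hn
end

section
/- Let (G, p) be a finite critical net in ℝ^k satisfying the balance condition. If G has at least one edge, then G has at least two leaves: |∂X| ≥ 2. -/
open scoped RealInnerProductSpace

/-!
Pick a direction `u` along which the vertex positions have pairwise distinct heights
`⟪p x, u⟫` (possible because finitely many proper hyperplanes do not cover the space).
At a vertex of maximal height every edge points strictly downwards, so the unit edge
vectors there cannot sum to zero; by the balance condition that vertex is a leaf.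
The same holds for a vertex of minimal height, and the two differ because the edge's
endpoints have different heights.
-/

theorem exists_forall_inner_ne_zero {E ι : Type*} [NormedAddCommGroup E] [InnerProductSpace ℝ E]
    [Finite ι] (v : ι → E) (hv : ∀ i, v i ≠ 0) : ∃ u : E, ∀ i, ⟪v i, u⟫ ≠ 0 := by
  by_contra! h
  have hcover : ⋃ i, (LinearMap.ker (innerₛₗ ℝ (v i)) : Set E) = Set.univ :=
    Set.eq_univ_of_forall fun u ↦ by simpa using h u
  obtain ⟨i, hi⟩ := Subspace.exists_eq_top_of_iUnion_eq_univ hcover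
  have : ⟪v i, v i⟫ = 0 := by
    simpa using LinearMap.congr_fun (LinearMap.ker_eq_top.mp hi) (v i)
  exact hv i (inner_self_eq_zero.mp this)

theorem exists_injective_inner {V E : Type*} [NormedAddCommGroup E] [InnerProductSpace ℝ E]
    [Finite V] {p : V → E} (hp : Function.Injective p) :
    ∃ u : E, Function.Injective fun x ↦ ⟪p x, u⟫ := by
  obtain ⟨u, hu⟩ :=
    exists_forall_inner_ne_zero (fun q : {q : V × V // q.1 ≠ q.2} ↦ p q.1.1 - p q.1.2) fun q ↦ sub_ne_zero.mpr (hp.ne q.2)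
  refine ⟨u, fun x y hxy ↦ ?_⟩
  by_contra hne
  exact hu ⟨(x, y), hne⟩ (by simpa [inner_sub_left, sub_eq_zero] using hxy)

theorem sum_inv_norm_smul_ne_zero {E ι : Type*} [NormedAddCommGroup E] [InnerProductSpace ℝ E]
    {s : Finset ι} (hs : s.Nonempty) {w : ι → E} {u : E} (hw : ∀ i ∈ s, 0 < ⟪w i, u⟫) :
    ∑ i ∈ s, ‖w i‖⁻¹ • w i ≠ 0 := by
  intro hsum
  have hpos : 0 < ⟪∑ i ∈ s, ‖w i‖⁻¹ • w i, u⟫ := by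
    rw [sum_inner]
    refine Finset.sum_pos (fun i hi ↦ ?_) hs
    have hwi : w i ≠ 0 := fun h ↦ by simpa [h] using hw i hi
    rw [real_inner_smul_left]
    exact mul_pos (inv_pos.mpr (norm_pos_iff.mpr hwi)) (hw i hi)
  simp [hsum] at hpos

namespace SimpleGraph

variable {V E : Type*} [NormedAddCommGroup E] [InnerProductSpace ℝ E] {G : SimpleGraph V}
  [Fintype V] [DecidableRel G.Adj]

theorem degree_eq_one_of_forall_adj_inner_lt {p : V → E} {u : E} {c : V}
    (hc : 1 ≤ G.degree c)
    (hbal : 2 ≤ G.degree c → ∑ y ∈ G.neighborFinset c, ‖p c - p y‖⁻¹ • (p c - p y) = 0)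
    (hlt : ∀ y, G.Adj c y → ⟪p y, u⟫ < ⟪p c, u⟫) : G.degree c = 1 := by
  by_contra hne
  refine sum_inv_norm_smul_ne_zero (u := u) ?_ (fun y hy ↦ ?_) (hbal (by omega))
  · rw [← Finset.card_pos, card_neighborFinset_eq_degree]; omega
  · rw [inner_sub_left, sub_pos]
    exact hlt y ((mem_neighborFinset G c y).mp hy)

theorem degree_eq_one_of_forall_inner_le {p : V → E} {u : E} {c : V}
    (hinj : Function.Injective fun x ↦ ⟪p x, u⟫)
    (hc : 1 ≤ G.degree c)
    (hbal : 2 ≤ G.degree c → ∑ y ∈ G.neighborFinset c, ‖p c - p y‖⁻¹ • (p c - p y) = 0)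
    (hmax : ∀ y, ⟪p y, u⟫ ≤ ⟪p c, u⟫) : G.degree c = 1 :=
  degree_eq_one_of_forall_adj_inner_lt hc hbal fun y hy ↦
    (hmax y).lt_of_ne (hinj.ne hy.ne')

end SimpleGraph

theorem two_le_card_leaves_general
    {k : ℕ} {V : Type*} [Fintype V]
    (G : SimpleGraph V) [DecidableRel G.Adj]
    (p : V → EuclideanSpace ℝ (Fin k)) (hinj : Function.Injective p)
    (hdeg1 : ∀ x : V, 1 ≤ G.degree x)
    (hbal : ∀ x : V, 2 ≤ G.degree x →
      ∑ y ∈ G.neighborFinset x, (‖p x - p y‖)⁻¹ • (p x - p y) = 0)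
    (hedge : ∃ x y : V, G.Adj x y) :
    2 ≤ (Finset.univ.filter fun l : V => G.degree l = 1).card := by
  obtain ⟨u, hu⟩ := exists_injective_inner hinj
  obtain ⟨x₀, y₀, hxy₀⟩ := hedge
  obtain ⟨a, -, ha⟩ := Finset.univ.exists_max_image (fun x ↦ ⟪p x, u⟫) ⟨x₀, Finset.mem_univ _⟩
  obtain ⟨b, -, hb⟩ := Finset.univ.exists_min_image (fun x ↦ ⟪p x, u⟫) ⟨x₀, Finset.mem_univ _⟩
  have hleaf_a : G.degree a = 1 :=
    G.degree_eq_one_of_forall_inner_le hu (hdeg1 a) (hbal a) fun y ↦ ha y (Finset.mem_univ y)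
  have hleaf_b : G.degree b = 1 :=
    G.degree_eq_one_of_forall_inner_le (u := -u)
      (by simpa [inner_neg_right, Function.comp_def] using neg_injective.comp hu)
      (hdeg1 b) (hbal b) fun y ↦ by simpa [inner_neg_right] using hb y (Finset.mem_univ y)
  have hab : a ≠ b := by
    rintro rfl
    have hx := ha x₀ (Finset.mem_univ _)
    have hy := ha y₀ (Finset.mem_univ _)
    have hx' := hb x₀ (Finset.mem_univ _)
    have hy' := hb y₀ (Finset.mem_univ _)
    exact hxy₀.ne (hu (by linarith))
  exact Finset.one_lt_card.mpr ⟨a, by simpa using hleaf_a, b, by simpa using hleaf_b, hab⟩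

/-- A finite critical net in `ℝ^k` satisfying the balance condition
and having at least one edge has at least two leaves. -/
theorem two_le_card_leaves
    {k : ℕ} (hk : 1 ≤ k) {V : Type*} [Fintype V] [DecidableEq V]
    (G : SimpleGraph V) [DecidableRel G.Adj]
    (p : V → EuclideanSpace ℝ (Fin k)) (hinj : Function.Injective p)
    (hdeg1 : ∀ x : V, 1 ≤ G.degree x)
    (hnoLL : ∀ x y : V, G.Adj x y → ¬(G.degree x = 1 ∧ G.degree y = 1))
    (hbal : ∀ x : V, 2 ≤ G.degree x →
      ∑ y ∈ G.neighborFinset x, (‖p x - p y‖)⁻¹ • (p x - p y) = 0)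
    (hedge : ∃ x y : V, G.Adj x y) :
    2 ≤ (Finset.univ.filter fun l : V => G.degree l = 1).card :=
  two_le_card_leaves_general G p hinj hdeg1 hbal hedge
end

section
/- Let (G, p) be a finite critical net in ℝ^k satisfying the balance condition. If G has a vertex of degree ≥ 3, then G has at least three leaves: |∂X| ≥ 3. -/
open scoped RealInnerProductSpace

section Aux

open Finset

set_option linter.unusedSectionVars false

variable {k : ℕ} {V : Type*} [Fintype V] [DecidableEq V]

/-- coordinates as plain pi type -/
noncomputable def pc (p : V → EuclideanSpace ℝ (Fin k)) (v : V) : Fin k → ℝ := p v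

/-- lexicographic order on coordinates -/
def lexlt {k : ℕ} (a b : Fin k → ℝ) : Prop := Pi.Lex (· < ·) (· < ·) a b

lemma lexlt_trichotomy {k : ℕ} (a b : Fin k → ℝ) : lexlt a b ∨ a = b ∨ lexlt b a :=
  by
    have h : ¬ lexlt a b → ¬ lexlt b a → a = b := (Pi.isTrichotomous_lex _ _ (wellFounded_lt : WellFounded ((· < ·) : Fin k → Fin k → Prop))).trichotomous a b
    by_cases h1 : lexlt a b
    · exact Or.inl h1
    by_cases h2 : lexlt b a
    · exact Or.inr (Or.inr h2)
    exact Or.inr (Or.inl (h h1 h2))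

lemma lex_key (G : SimpleGraph V) [DecidableRel G.Adj]
    (p : V → EuclideanSpace ℝ (Fin k)) (hinj : Function.Injective p)
    (x : V) (hne : (G.neighborFinset x).Nonempty)
    (hbal : ∑ y ∈ G.neighborFinset x, (‖p x - p y‖)⁻¹ • (p x - p y) = 0)
    (hle : ∀ y ∈ G.neighborFinset x, ¬ lexlt (pc p x) (pc p y)) :
    False := by
  set S := G.neighborFinset x with hS
  have hney : ∀ y ∈ S, y ≠ x := by
    intro y hy h
    subst h
    exact G.irrefl ((G.mem_neighborFinset y y).mp hy)
  have hpney : ∀ y ∈ S, p y ≠ p x := fun y hy h => hney y hy (hinj h)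
  have hcoord : ∀ i : Fin k, ∑ y ∈ S, (‖p x - p y‖)⁻¹ * (p x i - p y i) = 0 := by
    intro i
    have := congrArg (EuclideanSpace.proj (𝕜 := ℝ) i) hbal
    rw [map_sum, map_zero] at this
    simpa [smul_eq_mul] using this
  have key : ∀ n : ℕ, ∀ i : Fin k, (i : ℕ) = n → ∀ y ∈ S, p y i = p x i := by
    intro n
    induction n using Nat.strong_induction_on with
    | _ n IH =>
      intro i hi y hy
      have hIH : ∀ j : Fin k, j < i → ∀ z ∈ S, p z j = p x j := by
        intro j hj
        exact IH (j : ℕ) (by rw [← hi]; exact hj) j rfl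
      have hile : ∀ z ∈ S, p z i ≤ p x i := by
        intro z hz
        rcases lexlt_trichotomy (pc p z) (pc p x) with hlt | heq | hlt
        · obtain ⟨i0, hbelow, hi0⟩ := hlt
          rcases lt_trichotomy i0 i with h | h | h
          · exact absurd (hIH i0 h z hz) (ne_of_lt hi0)
          · exact le_of_lt (h ▸ hi0)
          · exact le_of_eq (hbelow i h)
        · exact absurd (hinj (PiLp.ext (fun i => congrFun heq i))) (hney z hz)
        · exact absurd hlt (hle z hz)
      have hterm :=
        (Finset.sum_eq_zero_iff_of_nonneg (fun z hz => by
          have h1 : (0:ℝ) ≤ (‖p x - p z‖)⁻¹ := inv_nonneg.mpr (norm_nonneg _)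
          have h2 : (0:ℝ) ≤ p x i - p z i := sub_nonneg.mpr (hile z hz)
          positivity)).mp (hcoord i) y hy
      have hnz : (‖p x - p y‖)⁻¹ ≠ 0 := by
        have : p x - p y ≠ 0 := sub_ne_zero.mpr (fun h => hpney y hy h.symm)
        simpa using norm_ne_zero_iff.mpr this
      rcases mul_eq_zero.mp hterm with h | h
      · exact absurd h hnz
      · linarith [sub_eq_zero.mp h]
  obtain ⟨y, hy⟩ := hne
  apply hney y hy
  apply hinj
  exact PiLp.ext (fun i => key i i rfl y hy)

lemma exists_leaf_max [Nonempty V] (G : SimpleGraph V) [DecidableRel G.Adj]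
    (p : V → EuclideanSpace ℝ (Fin k)) (hinj : Function.Injective p)
    (hdeg1 : ∀ v : V, 1 ≤ G.degree v)
    (hbal : ∀ v : V, 2 ≤ G.degree v →
      ∑ y ∈ G.neighborFinset v, (‖p v - p y‖)⁻¹ • (p v - p y) = 0)
    (g : EuclideanSpace ℝ (Fin k) →ₗ[ℝ] ℝ) :
    ∃ ℓ : V, G.degree ℓ = 1 ∧ ∀ v : V, g (p v) ≤ g (p ℓ) := by
  classical
  obtain ⟨m0, _, hm0⟩ := Finset.exists_max_image (univ : Finset V) (fun v => g (p v))
    univ_nonempty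
  set T : Finset V := univ.filter (fun v => ∀ w : V, g (p w) ≤ g (p v)) with hT
  have hm0T : m0 ∈ T := mem_filter.mpr ⟨mem_univ _, fun w => hm0 w (mem_univ _)⟩
  -- pick a lex-maximal element of T
  have : ∃ ℓ ∈ T, ∀ y ∈ T, ¬ lexlt (pc p ℓ) (pc p y) := by
    have hTne : (T.image (fun v => toLex (pc p v))).Nonempty := ⟨_, mem_image_of_mem _ hm0T⟩
    obtain ⟨z, hz, hmax⟩ := Finset.exists_maximal hTne
    obtain ⟨ℓ, hℓT, hℓz⟩ := mem_image.mp hz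
    refine ⟨ℓ, hℓT, fun y hy hlt => ?_⟩
    have hlt' : z < toLex (pc p y) := hℓz ▸ hlt
    exact lt_irrefl z (lt_of_lt_of_le hlt' (hmax (mem_image_of_mem _ hy) hlt'.le))
  obtain ⟨ℓ, hℓT, hℓmax⟩ := this
  have hℓprop : ∀ w : V, g (p w) ≤ g (p ℓ) := (mem_filter.mp hℓT).2
  refine ⟨ℓ, ?_, hℓprop⟩
  by_contra hdeg
  have h2 : 2 ≤ G.degree ℓ := by have := hdeg1 ℓ; omega
  have hb := hbal ℓ h2
  have hne : (G.neighborFinset ℓ).Nonempty := by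
    rw [← Finset.card_pos, SimpleGraph.card_neighborFinset_eq_degree]
    omega
  apply lex_key G p hinj ℓ hne hb
  intro y hy
  have hgsum : ∑ z ∈ G.neighborFinset ℓ, (‖p ℓ - p z‖)⁻¹ * (g (p ℓ) - g (p z)) = 0 := by
    have := congrArg g hb
    rw [map_sum, map_zero] at this
    simpa [map_smul, map_sub, smul_eq_mul] using this
  have hterm := (Finset.sum_eq_zero_iff_of_nonneg (fun z hz => by
      have h1 : (0:ℝ) ≤ (‖p ℓ - p z‖)⁻¹ := inv_nonneg.mpr (norm_nonneg _)
      have h2 : (0:ℝ) ≤ g (p ℓ) - g (p z) := sub_nonneg.mpr (hℓprop z)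
      positivity)).mp hgsum y hy
  have hney : y ≠ ℓ := fun h => G.irrefl (h ▸ (G.mem_neighborFinset ℓ y).mp hy)
  have hnz : (‖p ℓ - p y‖)⁻¹ ≠ 0 := by
    have : p ℓ - p y ≠ 0 := sub_ne_zero.mpr (fun h => hney (hinj h.symm))
    simpa using norm_ne_zero_iff.mpr this
  have hgy : g (p y) = g (p ℓ) := by
    rcases mul_eq_zero.mp hterm with h | h
    · exact absurd h hnz
    · linarith [sub_eq_zero.mp h]
  have hyT : y ∈ T := mem_filter.mpr ⟨mem_univ _, fun w => hgy ▸ hℓprop w⟩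
  exact hℓmax y hyT

end Aux

open Finset in
/-- A finite critical net in `ℝ^k` satisfying the balance condition
and having a vertex of degree at least 3 has at least three leaves. -/
theorem three_le_card_leaves
    {k : ℕ} (hk : 1 ≤ k) {V : Type*} [Fintype V] [DecidableEq V]
    (G : SimpleGraph V) [DecidableRel G.Adj]
    (p : V → EuclideanSpace ℝ (Fin k)) (hinj : Function.Injective p)
    (hdeg1 : ∀ x : V, 1 ≤ G.degree x)
    (hnoLL : ∀ x y : V, G.Adj x y → ¬(G.degree x = 1 ∧ G.degree y = 1))
    (hbal : ∀ x : V, 2 ≤ G.degree x →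
      ∑ y ∈ G.neighborFinset x, (‖p x - p y‖)⁻¹ • (p x - p y) = 0)
    (x : V) (hx : 3 ≤ G.degree x) :
    3 ≤ (Finset.univ.filter fun l : V => G.degree l = 1).card := by
  classical
  by_contra hcon
  push_neg at hcon
  haveI : Nonempty V := ⟨x⟩
  set L : Finset V := Finset.univ.filter (fun l : V => G.degree l = 1) with hL
  have hmemL : ∀ v : V, v ∈ L ↔ G.degree v = 1 := by
    intro v; simp [hL]
  have hleaf : ∀ g : EuclideanSpace ℝ (Fin k) →ₗ[ℝ] ℝ,
      ∃ ℓ : V, ℓ ∈ L ∧ ∀ v : V, g (p v) ≤ g (p ℓ) := by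
    intro g
    obtain ⟨ℓ, h1, h2⟩ := exists_leaf_max G p hinj hdeg1 hbal g
    exact ⟨ℓ, (hmemL ℓ).mpr h1, h2⟩
  -- L has exactly 2 elements a ≠ b (cards 0 and 1 are impossible)
  have hxL : x ∉ L := by
    intro h; rw [hmemL] at h; omega
  -- some leaf exists
  obtain ⟨ℓ0, hℓ0, -⟩ := hleaf 0
  have hcard1 : L.card ≠ 1 := by
    intro h1
    obtain ⟨a, ha⟩ := Finset.card_eq_one.mp h1
    have hbound : ∀ (g : EuclideanSpace ℝ (Fin k) →ₗ[ℝ] ℝ) (v : V), g (p v) ≤ g (p a) := by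
      intro g v
      obtain ⟨ℓ, hℓ, hb⟩ := hleaf g
      rw [ha, Finset.mem_singleton] at hℓ
      exact hℓ ▸ hb v
    have hallp : ∀ v : V, p v = p a := by
      intro v
      apply PiLp.ext
      intro i
      have h1 := hbound (EuclideanSpace.projₗ (𝕜 := ℝ) i) v
      have h2 := hbound (-(EuclideanSpace.projₗ (𝕜 := ℝ) i)) v
      simp only [LinearMap.neg_apply, neg_le_neg_iff] at h2
      have e1 : (EuclideanSpace.projₗ (𝕜 := ℝ) i) (p v) = p v i := rfl
      have e2 : (EuclideanSpace.projₗ (𝕜 := ℝ) i) (p a) = p a i := rfl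
      rw [e1, e2] at h1 h2
      exact le_antisymm h1 h2
    have : x = a := hinj (by rw [hallp x])
    have : x ∈ L := by rw [ha, this]; exact Finset.mem_singleton_self a
    exact hxL this
  have hcard2 : L.card = 2 := by
    have h0 : L.card ≠ 0 := Finset.card_ne_zero_of_mem hℓ0
    omega
  obtain ⟨a, b, hab, hLab⟩ := Finset.card_eq_two.mp hcard2
  -- all points lie in the segment [p a, p b]
  have hseg : ∀ v : V, p v ∈ segment ℝ (p a) (p b) := by
    intro v
    by_contra hv
    have hclosed : IsClosed (segment ℝ (p a) (p b)) := by
      rw [← convexHull_pair]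
      exact (Set.toFinite ({p a, p b} : Set _)).isClosed_convexHull ℝ
    obtain ⟨f, u, hfs, hfv⟩ :=
      geometric_hahn_banach_closed_point (convex_segment (p a) (p b)) hclosed hv
    obtain ⟨ℓ, hℓ, hb⟩ := hleaf (f : EuclideanSpace ℝ (Fin k) →L[ℝ] ℝ).toLinearMap
    have hpl : p ℓ ∈ segment ℝ (p a) (p b) := by
      rw [hLab, Finset.mem_insert, Finset.mem_singleton] at hℓ
      rcases hℓ with rfl | rfl
      · exact left_mem_segment ℝ _ _
      · exact right_mem_segment ℝ _ _
    have h1 : f (p v) ≤ f (p ℓ) := hb v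
    have h2 : f (p ℓ) < u := hfs _ hpl
    linarith
  -- parametrize points on the segment
  have hpab : p a ≠ p b := fun h => hab (hinj h)
  set d : EuclideanSpace ℝ (Fin k) := p b - p a with hd
  have hdne : d ≠ 0 := sub_ne_zero.mpr hpab.symm
  have hseg' : ∀ v : V, ∃ θ : ℝ, p v = p a + θ • d := by
    intro v
    have := hseg v
    rw [segment_eq_image'] at this
    obtain ⟨θ, -, hθ⟩ := this
    exact ⟨θ, hθ.symm⟩
  set t : V → ℝ := fun v => (hseg' v).choose with hts
  have hp : ∀ v : V, p v = p a + t v • d := fun v => (hseg' v).choose_spec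
  have tinj : ∀ v w : V, t v = t w → v = w := by
    intro v w h
    apply hinj
    rw [hp v, hp w, h]
  have hptt : ∀ v w : V, p v - p w = (t v - t w) • d := by
    intro v w
    rw [hp v, hp w, sub_smul]
    abel
  have hnormtt : ∀ v w : V, ‖p v - p w‖ = |t v - t w| * ‖d‖ := by
    intro v w
    rw [hptt v w, norm_smul, Real.norm_eq_abs]
  obtain ⟨i0, hi0⟩ : ∃ i : Fin k, d i ≠ 0 := by
    by_contra h
    push_neg at h
    exact hdne (PiLp.ext (fun i => by simp [h i]))
  -- up and down neighbour sets
  set dn : V → Finset V := fun v => (G.neighborFinset v).filter (fun y => t y < t v) with hdn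
  set up : V → Finset V := fun v => (G.neighborFinset v).filter (fun y => t v < t y) with hup
  have htne : ∀ v : V, ∀ y ∈ G.neighborFinset v, t y ≠ t v := by
    intro v y hy h
    exact G.irrefl ((tinj y v h) ▸ (G.mem_neighborFinset v y).mp hy)
  have hsplit : ∀ v : V, (dn v).card + (up v).card = G.degree v := by
    intro v
    rw [← SimpleGraph.card_neighborFinset_eq_degree]
    rw [← Finset.card_filter_add_card_filter_not (s := G.neighborFinset v)
      (p := fun y => t y < t v)]
    have hfeq : (G.neighborFinset v).filter (fun y => ¬ t y < t v) = up v := by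
      apply Finset.filter_congr
      intro y hy
      simp only [not_lt]
      exact ⟨fun h => lt_of_le_of_ne h (Ne.symm (htne v y hy)), le_of_lt⟩
    rw [hfeq]
  have hud : ∀ v : V, 2 ≤ G.degree v → (dn v).card = (up v).card := by
    intro v h2
    have hb := hbal v h2
    have hcoord : ∑ y ∈ G.neighborFinset v, (‖p v - p y‖)⁻¹ * ((t v - t y) * d i0) = 0 := by
      have := congrArg (EuclideanSpace.proj (𝕜 := ℝ) i0) hb
      rw [map_sum, map_zero] at this
      calc ∑ y ∈ G.neighborFinset v, (‖p v - p y‖)⁻¹ * ((t v - t y) * d i0)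
          = ∑ y ∈ G.neighborFinset v,
            (EuclideanSpace.proj (𝕜 := ℝ) i0) ((‖p v - p y‖)⁻¹ • (p v - p y)) := by
            apply Finset.sum_congr rfl
            intro y hy
            rw [hptt v y]
            simp [smul_eq_mul]
        _ = 0 := this
    have hsgn : ∑ y ∈ G.neighborFinset v, (t v - t y) / |t v - t y| = 0 := by
      have hC : (‖d‖)⁻¹ * d i0 ≠ 0 := by
        apply mul_ne_zero _ hi0
        simpa using norm_ne_zero_iff.mpr hdne
      have : (∑ y ∈ G.neighborFinset v, (t v - t y) / |t v - t y|) * ((‖d‖)⁻¹ * d i0) = 0 := by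
        rw [Finset.sum_mul]
        rw [← hcoord]
        apply Finset.sum_congr rfl
        intro y hy
        rw [hnormtt v y, mul_inv, div_eq_mul_inv]
        ring
      exact (mul_eq_zero.mp this).resolve_right hC
    have hsum2 : ((dn v).card : ℝ) - (up v).card = 0 := by
      rw [← Finset.sum_filter_add_sum_filter_not (G.neighborFinset v)
        (fun y => t y < t v)] at hsgn
      have e1 : ∑ y ∈ (G.neighborFinset v).filter (fun y => t y < t v),
          (t v - t y) / |t v - t y| = (dn v).card := by
        rw [Finset.sum_congr rfl (fun y hy => ?_), Finset.sum_const, nsmul_eq_mul, mul_one]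
        have hpos : 0 < t v - t y := sub_pos.mpr (Finset.mem_filter.mp hy).2
        rw [abs_of_pos hpos, div_self (ne_of_gt hpos)]
      have e2 : ∑ y ∈ (G.neighborFinset v).filter (fun y => ¬ t y < t v),
          (t v - t y) / |t v - t y| = -((up v).card : ℝ) := by
        have hfeq : (G.neighborFinset v).filter (fun y => ¬ t y < t v) = up v := by
          apply Finset.filter_congr
          intro y hy
          simp only [not_lt]
          exact ⟨fun h => lt_of_le_of_ne h (Ne.symm (htne v y hy)), le_of_lt⟩
        rw [hfeq, Finset.sum_congr rfl (fun y hy => ?_), Finset.sum_const, nsmul_eq_mul, mul_neg_one]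
        have hneg : t v - t y < 0 := sub_neg.mpr (Finset.mem_filter.mp hy).2
        rw [abs_of_neg hneg, div_neg, div_self (ne_of_lt hneg)]
      rw [e1, e2] at hsgn
      linarith
    have := sub_eq_zero.mp hsum2
    exact_mod_cast this
  -- extreme vertices are leaves
  obtain ⟨M, -, hM⟩ := Finset.exists_max_image (univ : Finset V) t univ_nonempty
  obtain ⟨m, -, hm⟩ := Finset.exists_min_image (univ : Finset V) t univ_nonempty
  have hM' : ∀ v : V, t v ≤ t M := fun v => hM v (mem_univ v)
  have hm' : ∀ v : V, t m ≤ t v := fun v => hm v (mem_univ v)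
  have hMleaf : G.degree M = 1 := by
    by_contra h
    have h2 : 2 ≤ G.degree M := by have := hdeg1 M; omega
    have hupM : up M = ∅ := by
      apply Finset.filter_eq_empty_iff.mpr
      intro y hy
      exact not_lt.mpr (hM' y)
    have := hsplit M
    rw [hupM, hud M h2, hupM] at this
    simp at this
    omega
  have hmleaf : G.degree m = 1 := by
    by_contra h
    have h2 : 2 ≤ G.degree m := by have := hdeg1 m; omega
    have hdnm : dn m = ∅ := by
      apply Finset.filter_eq_empty_iff.mpr
      intro y hy
      exact not_lt.mpr (hm' y)
    have := hsplit m
    rw [← hud m h2, hdnm] at this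
    simp at this
    omega
  have hxm : x ≠ m := fun h => hxL ((hmemL x).mpr (h ▸ hmleaf))
  have hxM : x ≠ M := fun h => hxL ((hmemL x).mpr (h ▸ hMleaf))
  have hmM : m ≠ M := by
    intro h
    obtain ⟨y1, hy1⟩ : (G.neighborFinset x).Nonempty := by
      rw [← Finset.card_pos, SimpleGraph.card_neighborFinset_eq_degree]; omega
    have hy1x : y1 ≠ x := fun hh => G.irrefl (hh ▸ (G.mem_neighborFinset x y1).mp hy1)
    have hall : ∀ v : V, v = M := by
      intro v
      apply tinj
      exact le_antisymm (hM' v) (h ▸ hm' v)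
    exact hy1x ((hall y1).trans (hall x).symm)
  -- the two leaves are exactly m and M
  have hLmM : L = {m, M} := by
    symm
    apply Finset.eq_of_subset_of_card_le
    · intro v hv
      rw [Finset.mem_insert, Finset.mem_singleton] at hv
      rcases hv with rfl | rfl
      · exact (hmemL v).mpr hmleaf
      · exact (hmemL v).mpr hMleaf
    · rw [hcard2, Finset.card_pair hmM]
  have hleafmM : ∀ v : V, G.degree v = 1 → v = m ∨ v = M := by
    intro v hv
    have : v ∈ L := (hmemL v).mpr hv
    rw [hLmM, Finset.mem_insert, Finset.mem_singleton] at this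
    exact this
  have htmx : t m < t x := lt_of_le_of_ne (hm' x) (fun h => hxm (tinj x m h.symm))
  have htxM : t x < t M := lt_of_le_of_ne (hM' x) (fun h => hxM (tinj x M h))
  -- the vertex set below x
  set A : Finset V := univ.filter (fun v => t v ≤ t x) with hA
  have hxA : x ∈ A := mem_filter.mpr ⟨mem_univ _, le_refl _⟩
  have hmA : m ∈ A := mem_filter.mpr ⟨mem_univ _, le_of_lt htmx⟩
  have hMA : M ∉ A := fun h => absurd (mem_filter.mp h).2 (not_le.mpr htxM)
  -- x sends at least two edges up
  have hdegx2 : 2 ≤ G.degree x := by omega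
  have hupx2 : 2 ≤ (up x).card := by
    have h1 := hsplit x
    have h2 := hud x hdegx2
    omega
  -- the neighbour of m goes up
  obtain ⟨y0, hy0⟩ := Finset.card_eq_one.mp
    ((SimpleGraph.card_neighborFinset_eq_degree (G := G) (v := m)).trans hmleaf)
  have hy0mem : y0 ∈ G.neighborFinset m := by rw [hy0]; exact Finset.mem_singleton_self _
  have hy0up : t m < t y0 :=
    lt_of_le_of_ne (hm' y0) (fun h => htne m y0 hy0mem h.symm)
  have hupm : (up m).card = 1 := by
    have : up m = {y0} := by
      rw [hup]
      simp only
      rw [hy0, Finset.filter_singleton, if_pos hy0up]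
    rw [this, Finset.card_singleton]
  have hdnm : (dn m).card = 0 := by
    have : dn m = ∅ := by
      rw [hdn]
      simp only
      rw [hy0, Finset.filter_singleton, if_neg (not_lt.mpr (le_of_lt hy0up))]
    rw [this, Finset.card_empty]
  -- vertexwise sum identity
  have S1 : ∑ v ∈ A, (up v).card = (∑ v ∈ A, (dn v).card) + 1 := by
    rw [← Finset.add_sum_erase A _ hmA, ← Finset.add_sum_erase A _ hmA, hupm, hdnm]
    have : ∑ v ∈ A.erase m, (up v).card = ∑ v ∈ A.erase m, (dn v).card := by
      apply Finset.sum_congr rfl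
      intro v hv
      have hvm : v ≠ m := Finset.ne_of_mem_erase hv
      have hvA : v ∈ A := Finset.mem_of_mem_erase hv
      have hdv : 2 ≤ G.degree v := by
        rcases Nat.lt_or_ge (G.degree v) 2 with h | h
        · have h1 : G.degree v = 1 := by have := hdeg1 v; omega
          rcases hleafmM v h1 with rfl | rfl
          · exact absurd rfl hvm
          · exact absurd hvA hMA
        · exact h
      exact (hud v hdv).symm
    omega
  -- double counting: down-edges within A match up-edges within A
  set upin : V → Finset V := fun v =>
    (G.neighborFinset v).filter (fun y => t v < t y ∧ t y ≤ t x) with hupin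
  set cross : V → Finset V := fun v =>
    (G.neighborFinset v).filter (fun y => t v < t y ∧ ¬ t y ≤ t x) with hcross
  have hite : ∀ (P : Prop) [Decidable P] (F : V → Prop) [DecidablePred F],
      (if P then (∑ y ∈ univ, if F y then (1:ℕ) else 0) else 0)
        = ∑ y ∈ univ, if P ∧ F y then 1 else 0 := by
    intro P _ F _
    split_ifs with hP
    · exact Finset.sum_congr rfl (fun y _ => by simp [hP])
    · exact (Finset.sum_eq_zero (fun y _ => by simp [hP])).symm
  have hdncard : ∀ v : V, (dn v).card = ∑ y ∈ univ, if G.Adj v y ∧ t y < t v then 1 else 0 := by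
    intro v
    rw [hdn]
    simp only
    rw [SimpleGraph.neighborFinset_eq_filter, Finset.filter_filter, Finset.card_filter]
  have hupincard : ∀ v : V, (upin v).card
      = ∑ y ∈ univ, if G.Adj v y ∧ (t v < t y ∧ t y ≤ t x) then 1 else 0 := by
    intro v
    rw [hupin]
    simp only
    rw [SimpleGraph.neighborFinset_eq_filter, Finset.filter_filter, Finset.card_filter]
  have S2 : ∑ v ∈ A, (dn v).card = ∑ v ∈ A, (upin v).card := by
    have l1 : ∑ v ∈ A, (dn v).card = ∑ v ∈ univ, ∑ y ∈ univ,
        (if t v ≤ t x ∧ (G.Adj v y ∧ t y < t v) then 1 else 0) := by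
      rw [hA, Finset.sum_filter]
      exact Finset.sum_congr rfl (fun v _ => by rw [hdncard v, hite])
    have l2 : ∑ v ∈ A, (upin v).card = ∑ v ∈ univ, ∑ y ∈ univ,
        (if t v ≤ t x ∧ (G.Adj v y ∧ (t v < t y ∧ t y ≤ t x)) then 1 else 0) := by
      rw [hA, Finset.sum_filter]
      exact Finset.sum_congr rfl (fun v _ => by rw [hupincard v, hite])
    rw [l1, l2, Finset.sum_comm]
    apply Finset.sum_congr rfl
    intro y _
    apply Finset.sum_congr rfl
    intro v _
    apply if_congr _ rfl rfl
    constructor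
    · rintro ⟨h1, h2, h3⟩
      exact ⟨le_of_lt (lt_of_lt_of_le h3 h1), h2.symm, h3, h1⟩
    · rintro ⟨h1, h2, h3, h4⟩
      exact ⟨h4, h2.symm, h3⟩
  -- up splits into upin and cross
  have S3 : ∀ v : V, (up v).card = (upin v).card + (cross v).card := by
    intro v
    rw [← Finset.card_filter_add_card_filter_not (s := up v)
      (p := fun y => t y ≤ t x)]
    congr 1
    · rw [hup, hupin]
      simp only
      rw [Finset.filter_filter]
    · rw [hup, hcross]
      simp only
      rw [Finset.filter_filter]
  have hcrossx : (cross x).card = (up x).card := by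
    have : cross x = up x := by
      rw [hup, hcross]
      simp only
      apply Finset.filter_congr
      intro y hy
      exact ⟨fun h => h.1, fun h => ⟨h, not_le.mpr h⟩⟩
    rw [this]
  have hsum3 : ∑ v ∈ A, (up v).card = ∑ v ∈ A, (upin v).card + ∑ v ∈ A, (cross v).card := by
    rw [← Finset.sum_add_distrib]
    exact Finset.sum_congr rfl (fun v _ => S3 v)
  have hcross1 : ∑ v ∈ A, (cross v).card = 1 := by omega
  have hcross2 : 2 ≤ ∑ v ∈ A, (cross v).card := by
    calc 2 ≤ (up x).card := hupx2
      _ = (cross x).card := hcrossx.symm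
      _ ≤ ∑ v ∈ A, (cross v).card :=
        Finset.single_le_sum (f := fun v => (cross v).card) (fun v _ => Nat.zero_le _) hxA
  omega
end

section
/- Let (G, p) be a finite critical net in ℝ^3 (the case k = 3) satisfying the balance condition. Then the total torque vanishes: for every vector e ∈ ℝ^3, ∑_{l ∈ ∂X} ⟪u_l, e × p (n_l)⟫ = 0, where × denotes the cross product in ℝ^3. -/
open scoped RealInnerProductSpace

/-- In a finite critical net in `ℝ^3` satisfying the balance condition,
the total torque vanishes: for every vector `e`, `∑_{l ∈ ∂X} ⟪u_l, e × p(n_l)⟫ = 0`. -/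
theorem total_torque_eq_zero
    {V : Type*} [Fintype V] [DecidableEq V]
    (G : SimpleGraph V) [DecidableRel G.Adj]
    (p : V → EuclideanSpace ℝ (Fin 3)) (hinj : Function.Injective p)
    (hdeg1 : ∀ x : V, 1 ≤ G.degree x)
    (hnoLL : ∀ x y : V, G.Adj x y → ¬(G.degree x = 1 ∧ G.degree y = 1))
    (hbal : ∀ x : V, 2 ≤ G.degree x →
      ∑ y ∈ G.neighborFinset x, (‖p x - p y‖)⁻¹ • (p x - p y) = 0)
    (n : V → V) (hn : ∀ l : V, G.degree l = 1 → G.Adj l (n l))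
    (e : EuclideanSpace ℝ (Fin 3)) :
    ∑ l ∈ Finset.univ.filter (fun l : V => G.degree l = 1),
      ⟪(‖p l - p (n l)‖)⁻¹ • (p l - p (n l)),
        (WithLp.equiv 2 (Fin 3 → ℝ)).symm
          (crossProduct (WithLp.equiv 2 (Fin 3 → ℝ) e)
            (WithLp.equiv 2 (Fin 3 → ℝ) (p (n l))))⟫ = 0 := by
  classical
  set Eq2 := WithLp.equiv 2 (Fin 3 → ℝ) with hEq2
  set E : EuclideanSpace ℝ (Fin 3) → EuclideanSpace ℝ (Fin 3) :=
    fun q => Eq2.symm (crossProduct (Eq2 e) (Eq2 q)) with hE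
  -- inner product against E as a dot product
  have lemA : ∀ a b : EuclideanSpace ℝ (Fin 3),
      ⟪a, E b⟫ = dotProduct (Eq2 a) (crossProduct (Eq2 e) (Eq2 b)) := by
    intro a b
    simp [hE, PiLp.inner_apply, RCLike.inner_apply, dotProduct, hEq2, mul_comm]
  have horth : ∀ a : EuclideanSpace ℝ (Fin 3), ⟪a, E a⟫ = 0 := by
    intro a
    rw [lemA]
    exact dot_cross_self (Eq2 e) (Eq2 a)
  have hEsub : ∀ a b : EuclideanSpace ℝ (Fin 3), E a - E b = E (a - b) := by
    intro a b
    simp only [hE]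
    ext i
    simp [hEq2, map_sub]
  set F : V → V → ℝ := fun x y => ⟪(‖p x - p y‖)⁻¹ • (p x - p y), E (p x)⟫ with hF
  have hanti : ∀ x y : V, F x y + F y x = 0 := by
    intro x y
    have hnorm : ‖p y - p x‖ = ‖p x - p y‖ := norm_sub_rev _ _
    have h1 : F x y = (‖p x - p y‖)⁻¹ * ⟪p x - p y, E (p x)⟫ :=
      real_inner_smul_left _ _ _
    have h2 : F y x = (‖p x - p y‖)⁻¹ * (-⟪p x - p y, E (p y)⟫) := by
      show ⟪(‖p y - p x‖)⁻¹ • (p y - p x), E (p y)⟫ = _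
      rw [real_inner_smul_left, hnorm, show p y - p x = -(p x - p y) by abel, inner_neg_left]
    rw [h1, h2, ← mul_add]
    have h3 : ⟪p x - p y, E (p x)⟫ + -⟪p x - p y, E (p y)⟫
        = ⟪p x - p y, E (p x) - E (p y)⟫ := by
      rw [inner_sub_right]; ring
    rw [h3, hEsub, horth, mul_zero]
  -- the double sum vanishes by antisymmetry
  set S : ℝ := ∑ x : V, ∑ y ∈ G.neighborFinset x, F x y with hS
  have key : ∀ x : V, ∑ y ∈ G.neighborFinset x, F x y
      = ∑ y : V, if G.Adj x y then F x y else 0 := by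
    intro x
    rw [SimpleGraph.neighborFinset_eq_filter, Finset.sum_filter]
  have hS0 : S = 0 := by
    have hS2 : S = ∑ x : V, ∑ y : V, if G.Adj x y then F y x else 0 := by
      rw [hS]
      simp_rw [key]
      rw [Finset.sum_comm]
      refine Finset.sum_congr rfl fun x _ => Finset.sum_congr rfl fun y _ => ?_
      simp_rw [G.adj_comm x y]
    have h2S : S + S = 0 := by
      nth_rewrite 1 [hS]
      simp_rw [key]
      rw [hS2, ← Finset.sum_add_distrib]
      simp_rw [← Finset.sum_add_distrib]
      refine Finset.sum_eq_zero fun x _ => Finset.sum_eq_zero fun y _ => ?_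
      split
      · exact hanti x y
      · simp
    linarith
  -- interior rows vanish
  have hint : ∀ x : V, ¬ G.degree x = 1 → ∑ y ∈ G.neighborFinset x, F x y = 0 := by
    intro x hx
    have hd2 : 2 ≤ G.degree x := by have := hdeg1 x; omega
    calc ∑ y ∈ G.neighborFinset x, F x y
        = ⟪∑ y ∈ G.neighborFinset x, (‖p x - p y‖)⁻¹ • (p x - p y), E (p x)⟫ := by
          rw [sum_inner]
      _ = 0 := by rw [hbal x hd2, inner_zero_left]
  -- leaf neighborhoods
  have hleaf : ∀ l : V, G.degree l = 1 → G.neighborFinset l = {n l} := by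
    intro l hl
    have hm : n l ∈ G.neighborFinset l := by
      rw [SimpleGraph.mem_neighborFinset]; exact hn l hl
    have hc : (G.neighborFinset l).card = 1 := hl
    obtain ⟨a, ha⟩ := Finset.card_eq_one.mp hc
    rw [ha] at hm ⊢
    rw [Finset.mem_singleton] at hm
    rw [hm]
  -- sum over leaves of F l (n l) is zero
  have hsplit : ∑ l ∈ Finset.univ.filter (fun l : V => G.degree l = 1), F l (n l) = 0 := by
    have h1 : ∑ l ∈ Finset.univ.filter (fun l : V => G.degree l = 1), F l (n l)
        = ∑ l ∈ Finset.univ.filter (fun l : V => G.degree l = 1),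
            ∑ y ∈ G.neighborFinset l, F l y := by
      refine Finset.sum_congr rfl fun l hl => ?_
      rw [hleaf l (Finset.mem_filter.mp hl).2, Finset.sum_singleton]
    have h2 : ∑ l ∈ Finset.univ.filter (fun l : V => ¬ G.degree l = 1),
        ∑ y ∈ G.neighborFinset l, F l y = 0 :=
      Finset.sum_eq_zero fun x hx => hint x (Finset.mem_filter.mp hx).2
    have h3 := Finset.sum_filter_add_sum_filter_not Finset.univ
      (fun l : V => G.degree l = 1) (fun x => ∑ y ∈ G.neighborFinset x, F x y)
    rw [h2, add_zero] at h3
    rw [h1, h3, ← hS, hS0]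
  -- each torque term equals F l (n l)
  calc ∑ l ∈ Finset.univ.filter (fun l : V => G.degree l = 1),
      ⟪(‖p l - p (n l)‖)⁻¹ • (p l - p (n l)), E (p (n l))⟫
      = ∑ l ∈ Finset.univ.filter (fun l : V => G.degree l = 1), F l (n l) := by
        refine Finset.sum_congr rfl fun l _ => ?_
        have h4 : F l (n l) - ⟪(‖p l - p (n l)‖)⁻¹ • (p l - p (n l)), E (p (n l))⟫
            = (‖p l - p (n l)‖)⁻¹ * ⟪p l - p (n l), E (p l - p (n l))⟫ := by
          simp only [hF]
          rw [← inner_sub_right, hEsub, real_inner_smul_left]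
        rw [horth, mul_zero] at h4
        linarith
    _ = 0 := hsplit
end

section
/- Let (G, p) be a finite critical net in ℝ^k satisfying the balance condition. Then the image of every vertex lies in the convex hull of the images of the leaves: {p x : x ∈ V} ⊆ convexHull ℝ {p l : l ∈ ∂X}. -/
open scoped RealInnerProductSpace

/-- A finite critical net in `ℝ^k` satisfying the balance condition is
contained in the convex hull of (the images of) its leaves. -/
theorem range_subset_convexHull_leaves
    {k : ℕ} (hk : 1 ≤ k) {V : Type*} [Fintype V] [DecidableEq V]
    (G : SimpleGraph V) [DecidableRel G.Adj]
    (p : V → EuclideanSpace ℝ (Fin k)) (hinj : Function.Injective p)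
    (hdeg1 : ∀ x : V, 1 ≤ G.degree x)
    (hnoLL : ∀ x y : V, G.Adj x y → ¬(G.degree x = 1 ∧ G.degree y = 1))
    (hbal : ∀ x : V, 2 ≤ G.degree x →
      ∑ y ∈ G.neighborFinset x, (‖p x - p y‖)⁻¹ • (p x - p y) = 0) :
    Set.range p ⊆ convexHull ℝ (p '' {l : V | G.degree l = 1}) := by
  classical
  set A : Set (EuclideanSpace ℝ (Fin k)) := Set.range p with hA
  set L : Set (EuclideanSpace ℝ (Fin k)) :=
    convexHull ℝ (p '' {l : V | G.degree l = 1}) with hL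
  have hAfin : A.Finite := Set.finite_range p
  set K : Set (EuclideanSpace ℝ (Fin k)) := convexHull ℝ A with hK
  have hKcomp : IsCompact K := hAfin.isCompact_convexHull (𝕜 := ℝ)
  have hKconv : Convex ℝ K := convex_convexHull ℝ A
  -- every extreme point of K lies in L
  have hext : K.extremePoints ℝ ⊆ L := by
    intro e he
    have heA : e ∈ A := extremePoints_convexHull_subset he
    obtain ⟨m, rfl⟩ := heA
    by_cases hdm : G.degree m = 1
    · exact subset_convexHull ℝ _ ⟨m, hdm, rfl⟩
    · exfalso
      have hdm2 : 2 ≤ G.degree m := by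
        have := hdeg1 m; omega
      have hbalm := hbal m hdm2
      set N := G.neighborFinset m with hN
      have hNne : 0 < N.card := by
        rw [hN, G.card_neighborFinset_eq_degree]; omega
      set w : V → ℝ := fun y => (‖p m - p y‖)⁻¹ with hw
      have hwpos : ∀ y ∈ N, 0 < w y := by
        intro y hy
        have hadj : G.Adj m y := (G.mem_neighborFinset m y).1 hy
        have hne : p m - p y ≠ 0 := by
          intro h
          exact G.ne_of_adj hadj (hinj (sub_eq_zero.1 h))
        simp only [hw]
        exact inv_pos.2 (norm_pos_iff.2 hne)
      have hwsum : 0 < ∑ y ∈ N, w y := by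
        apply Finset.sum_pos hwpos
        exact Finset.card_pos.1 hNne
      -- p m is the center of mass of its neighbors
      have h0 : ∑ y ∈ N, (w y • p m - w y • p y) = 0 := by
        simpa [hw, smul_sub] using hbalm
      rw [Finset.sum_sub_distrib, sub_eq_zero, ← Finset.sum_smul] at h0
      have hcm : N.centerMass w p = p m := by
        rw [Finset.centerMass, ← h0, smul_smul, inv_mul_cancel₀ hwsum.ne', one_smul]
      -- hence p m lies in the convex hull of the other points of A
      have hmem : p m ∈ convexHull ℝ (A \ {p m}) := by
        have hmem' : N.centerMass w p ∈ convexHull ℝ (A \ {p m}) := by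
          refine Finset.centerMass_mem_convexHull N (fun y hy => (hwpos y hy).le) hwsum
            (fun y hy => ?_)
          have hadj : G.Adj m y := (G.mem_neighborFinset m y).1 hy
          refine ⟨⟨y, rfl⟩, ?_⟩
          simp only [Set.mem_singleton_iff]
          exact fun h => G.ne_of_adj hadj (hinj h).symm
        rwa [hcm] at hmem'
      -- but extreme points are not in any such hull
      rw [hKconv.mem_extremePoints_iff_convex_diff] at he
      have hsub : convexHull ℝ (A \ {p m}) ⊆ K \ {p m} :=
        convexHull_min (Set.diff_subset_diff_left (subset_convexHull ℝ A)) he.2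
      exact (hsub hmem).2 rfl
  -- conclude via Krein–Milman
  have hLclosed : IsClosed L := (hAfin.subset (Set.image_subset_range p _)).isClosed_convexHull (𝕜 := ℝ)
  have hKL : K ⊆ L := by
    rw [← closure_convexHull_extremePoints hKcomp hKconv]
    have : convexHull ℝ (K.extremePoints ℝ) ⊆ L :=
      convexHull_min hext (convex_convexHull ℝ _)
    calc closure (convexHull ℝ (K.extremePoints ℝ)) ⊆ closure L := closure_mono this
      _ = L := hLclosed.closure_eq
  exact fun q hq => hKL (subset_convexHull ℝ A hq)
end

section
/- Let (G, p) be a finite critical net in ℝ^k satisfying the balance condition. Let v ∈ EuclideanSpace ℝ (Fin k) and λ ∈ ℝ be such that ⟪p x, v⟫ ≠ λ for every vertex x. Then the current through the hyperplane {⟪·, v⟫ = λ} equals the sum of the leaf currents on the upper side: ∑_{edges {x,y} of G with ⟪p x, v⟫ < λ < ⟪p y, v⟫} ⟪(p y − p x)/‖p y − p x‖, v⟫ = ∑_{l ∈ ∂X with ⟪p l, v⟫ > λ} ⟪u_l, v⟫. -/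
/-! The edge current `c x y = ⟪(p x - p y) / ‖p x - p y‖, v⟫` is antisymmetric, so in the total
outflow of the vertices above the hyperplane the edges with both ends above cancel, and only the
crossing edges remain (a discrete divergence theorem). On the other hand, the outflow of an
interior vertex vanishes by the balance condition and the outflow of a leaf is its leaf current. -/

open scoped RealInnerProductSpace

open Finset

namespace SimpleGraph

variable {V : Type*} [Fintype V] (G : SimpleGraph V) [DecidableRel G.Adj]

theorem sum_sum_neighborFinset_comm {M : Type*} [AddCommMonoid M] (g : V → V → M) :
    ∑ x, ∑ y ∈ G.neighborFinset x, g x y = ∑ x, ∑ y ∈ G.neighborFinset x, g y x :=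
  sum_comm' fun x y => by simp [G.adj_comm]

variable {R : Type*} [NonAssocRing R] [NoZeroDivisors R] [CharZero R]

theorem sum_sum_neighborFinset_ite_eq_zero_of_antisymm {f : V → V → R}
    (hf : ∀ x y, f y x = -f x y) (U : V → Prop) [DecidablePred U] :
    ∑ x, ∑ y ∈ G.neighborFinset x, (if U x ∧ U y then f x y else 0) = 0 := by
  refine CharZero.eq_neg_self_iff.mp ((G.sum_sum_neighborFinset_comm _).trans ?_)
  simp only [← sum_neg_distrib]
  refine sum_congr rfl fun x _ => sum_congr rfl fun y _ => ?_
  by_cases hx : U x <;> by_cases hy : U y <;> simp [hx, hy, hf x y]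

theorem sum_cut_eq_sum_outflow {f : V → V → R} (hf : ∀ x y, f y x = -f x y)
    (U : V → Prop) [DecidablePred U] :
    ∑ x, ∑ y ∈ G.neighborFinset x, (if ¬U x ∧ U y then f y x else 0)
      = ∑ x with U x, ∑ y ∈ G.neighborFinset x, f x y := by
  calc ∑ x, ∑ y ∈ G.neighborFinset x, (if ¬U x ∧ U y then f y x else 0)
      = ∑ x, ∑ y ∈ G.neighborFinset x, (if U x ∧ ¬U y then f x y else 0) :=
        (G.sum_sum_neighborFinset_comm _).trans <| by simp only [and_comm]
    _ = (∑ x, ∑ y ∈ G.neighborFinset x, (if U x ∧ U y then f x y else 0))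
          + ∑ x, ∑ y ∈ G.neighborFinset x, (if U x ∧ ¬U y then f x y else 0) := by
        rw [G.sum_sum_neighborFinset_ite_eq_zero_of_antisymm hf U, zero_add]
    _ = ∑ x with U x, ∑ y ∈ G.neighborFinset x, f x y := by
        simp only [sum_filter, ← sum_add_distrib]
        refine sum_congr rfl fun x _ => ?_
        split_ifs with hx
        · exact sum_congr rfl fun y _ => by by_cases hy : U y <;> simp [hx, hy]
        · simp [hx]

theorem sum_neighborFinset_eq_ite_degree_eq_one {M : Type*} [AddCommMonoid M] {x : V}
    (g : V → M) (n : V) (hn : G.degree x = 1 → G.Adj x n)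
    (hg : 2 ≤ G.degree x → ∑ y ∈ G.neighborFinset x, g y = 0) :
    ∑ y ∈ G.neighborFinset x, g y = if G.degree x = 1 then g n else 0 := by
  split_ifs with h1
  · obtain ⟨m, hm⟩ := card_eq_one.mp ((G.card_neighborFinset_eq_degree x).trans h1)
    have hnm : n = m := mem_singleton.mp (hm ▸ (G.mem_neighborFinset x n).mpr (hn h1))
    rw [hm, hnm, sum_singleton]
  · rcases Nat.lt_or_ge (G.degree x) 2 with h | h
    · rw [card_eq_zero.mp ((G.card_neighborFinset_eq_degree x).trans (by omega)), sum_empty]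
    · exact hg h

end SimpleGraph

theorem inv_norm_sub_smul_sub_rev {E : Type*} [SeminormedAddCommGroup E] [NormedSpace ℝ E]
    (a b : E) : ‖b - a‖⁻¹ • (b - a) = -(‖a - b‖⁻¹ • (a - b)) := by
  rw [norm_sub_rev, ← smul_neg, neg_sub]

theorem current_through_cut_eq_sum_upper_leaf_currents_general
    {k : ℕ} {V : Type*} [Fintype V]
    (G : SimpleGraph V) [DecidableRel G.Adj]
    (p : V → EuclideanSpace ℝ (Fin k))
    (hbal : ∀ x : V, 2 ≤ G.degree x →
      ∑ y ∈ G.neighborFinset x, (‖p x - p y‖)⁻¹ • (p x - p y) = 0)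
    (n : V → V) (hn : ∀ l : V, G.degree l = 1 → G.Adj l (n l))
    (v : EuclideanSpace ℝ (Fin k)) (lam : ℝ)
    (hlam : ∀ x : V, ⟪p x, v⟫ ≠ lam) :
    ∑ x : V, ∑ y ∈ G.neighborFinset x,
        (if ⟪p x, v⟫ < lam ∧ lam < ⟪p y, v⟫
          then ⟪(‖p y - p x‖)⁻¹ • (p y - p x), v⟫ else 0)
      = ∑ l ∈ (Finset.univ.filter fun l : V => G.degree l = 1).filter
          (fun l => lam < ⟪p l, v⟫),
          ⟪(‖p l - p (n l)‖)⁻¹ • (p l - p (n l)), v⟫ := by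
  set current : V → V → ℝ := fun x y => ⟪‖p x - p y‖⁻¹ • (p x - p y), v⟫
  have hanti : ∀ x y, current y x = -current x y := fun x y => by
    simp only [current, inv_norm_sub_smul_sub_rev (p x), inner_neg_left]
  have hbelow : ∀ x, ⟪p x, v⟫ < lam ↔ ¬lam < ⟪p x, v⟫ := fun x =>
    ⟨fun h => h.le.not_gt, fun h => (not_lt.mp h).lt_of_ne (hlam x)⟩
  have houtflow : ∀ x, ∑ y ∈ G.neighborFinset x, current x y
      = if G.degree x = 1 then current x (n x) else 0 := fun x =>
    G.sum_neighborFinset_eq_ite_degree_eq_one _ (n x) (hn x) fun h => by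
      simp only [current, ← sum_inner, hbal x h, inner_zero_left]
  simp_rw [hbelow]
  rw [G.sum_cut_eq_sum_outflow hanti, filter_filter, sum_filter, sum_filter]
  exact sum_congr rfl fun x _ => by
    rw [houtflow, ← ite_and]; exact if_congr and_comm rfl rfl

/-- In a finite critical net in `ℝ^k` satisfying the balance
condition, for a direction `v` and a level `lam` avoided by all vertices, the current
through the hyperplane `{⟪·, v⟫ = lam}` (each crossing edge being counted once, with
the orientation `x → y` going upward) equals the sum of the leaf currents on the upper
side of the hyperplane. -/
theorem current_through_cut_eq_sum_upper_leaf_currents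
    {k : ℕ} (hk : 1 ≤ k) {V : Type*} [Fintype V] [DecidableEq V]
    (G : SimpleGraph V) [DecidableRel G.Adj]
    (p : V → EuclideanSpace ℝ (Fin k)) (hinj : Function.Injective p)
    (hdeg1 : ∀ x : V, 1 ≤ G.degree x)
    (hnoLL : ∀ x y : V, G.Adj x y → ¬(G.degree x = 1 ∧ G.degree y = 1))
    (hbal : ∀ x : V, 2 ≤ G.degree x →
      ∑ y ∈ G.neighborFinset x, (‖p x - p y‖)⁻¹ • (p x - p y) = 0)
    (n : V → V) (hn : ∀ l : V, G.degree l = 1 → G.Adj l (n l))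
    (v : EuclideanSpace ℝ (Fin k)) (lam : ℝ)
    (hlam : ∀ x : V, ⟪p x, v⟫ ≠ lam) :
    ∑ x : V, ∑ y ∈ G.neighborFinset x,
        (if ⟪p x, v⟫ < lam ∧ lam < ⟪p y, v⟫
          then ⟪(‖p y - p x‖)⁻¹ • (p y - p x), v⟫ else 0)
      = ∑ l ∈ (Finset.univ.filter fun l : V => G.degree l = 1).filter
          (fun l => lam < ⟪p l, v⟫),
          ⟪(‖p l - p (n l)‖)⁻¹ • (p l - p (n l)), v⟫ :=
  current_through_cut_eq_sum_upper_leaf_currents_general G p hbal n hn v lam hlam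
end

section
/- Let (G, p) be a finite critical net in ℝ^k satisfying the balance condition. Let v ∈ EuclideanSpace ℝ (Fin k) with ‖v‖ = 1 and λ ∈ ℝ be such that ⟪p x, v⟫ ≠ λ for every vertex x. Then the absolute value of the current through the hyperplane {⟪·, v⟫ = λ} is at most half the number of leaves: |∑_{edges {x,y} of G with ⟪p x, v⟫ < λ < ⟪p y, v⟫} ⟪(p y − p x)/‖p y − p x‖, v⟫| ≤ |∂X| / 2. -/
open scoped RealInnerProductSpace

open Finset

/-! Let `c x y = ⟪(p x - p y) / ‖p x - p y‖, v⟫`; it is antisymmetric and `|c| ≤ 1`. The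
outgoing flux `∑_{y ~ x} c x y` vanishes at interior vertices by balance and is at most `1`
in absolute value at leaves. Summed over the sublevel set `A = {⟪p ·, v⟫ < lam}`, the flux
along edges inside `A` cancels and what remains is minus the current, so
`|current| ≤ #(leaves in A)`. The total flux over all vertices is zero, so the complement of
`A` gives `|current| ≤ #(leaves outside A)`, and the two bounds add up. -/

lemma abs_inner_inv_norm_smul_le {E : Type*} [NormedAddCommGroup E] [InnerProductSpace ℝ E]
    (w v : E) : |⟪‖w‖⁻¹ • w, v⟫| ≤ ‖v‖ :=
  (abs_real_inner_le_norm _ _).trans <|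
    mul_le_of_le_one_left (norm_nonneg v) (by simpa using inv_norm_smul_mem_unitClosedBall w)

namespace SimpleGraph

variable {V : Type*} [Fintype V] (G : SimpleGraph V) [DecidableRel G.Adj]
  {c : V → V → ℝ} (P : V → Prop) [DecidablePred P]

lemma sum_sum_neighborFinset_filter_eq_zero (hanti : ∀ x y, G.Adj x y → c y x = -c x y) :
    ∑ x with P x, ∑ y ∈ G.neighborFinset x with P y, c x y = 0 := by
  have hS : ∑ x with P x, ∑ y ∈ G.neighborFinset x with P y, c x y
      = ∑ x, ∑ y, if P x ∧ G.Adj x y ∧ P y then c x y else 0 := by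
    simp only [sum_filter, neighborFinset_eq_filter, ite_and, ite_sum_zero]
  have hneg : ∑ x, ∑ y, (if P x ∧ G.Adj x y ∧ P y then c x y else 0)
      = -∑ x, ∑ y, if P x ∧ G.Adj x y ∧ P y then c x y else 0 := by
    conv_lhs => rw [sum_comm]
    simp only [← sum_neg_distrib]
    refine sum_congr rfl fun x _ => sum_congr rfl fun y _ => ?_
    by_cases h : P x ∧ G.Adj x y ∧ P y
    · rw [if_pos ⟨h.2.2, h.2.1.symm, h.1⟩, if_pos h, hanti x y h.2.1]
    · rw [if_neg fun h' => h ⟨h'.2.2, h'.2.1.symm, h'.1⟩, if_neg h, neg_zero]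
  linarith

omit [DecidablePred P] in
lemma sum_sum_neighborFinset_eq_zero (hanti : ∀ x y, G.Adj x y → c y x = -c x y) :
    ∑ x, ∑ y ∈ G.neighborFinset x, c x y = 0 := by
  simpa using G.sum_sum_neighborFinset_filter_eq_zero (fun _ => True) hanti

lemma sum_sum_neighborFinset_eq_sum_crossing (hanti : ∀ x y, G.Adj x y → c y x = -c x y) :
    ∑ x with P x, ∑ y ∈ G.neighborFinset x, c x y
      = ∑ x with P x, ∑ y ∈ G.neighborFinset x with ¬P y, c x y := by
  simp only [← sum_filter_add_sum_filter_not (G.neighborFinset _) P, sum_add_distrib,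
    G.sum_sum_neighborFinset_filter_eq_zero P hanti, zero_add]

lemma abs_sum_neighborFinset_le_ite (hbound : ∀ x y, |c x y| ≤ 1)
    (hbal : ∀ x, 2 ≤ G.degree x → ∑ y ∈ G.neighborFinset x, c x y = 0) (x : V) :
    |∑ y ∈ G.neighborFinset x, c x y| ≤ if G.degree x = 1 then 1 else 0 := by
  split_ifs with hx
  · calc |∑ y ∈ G.neighborFinset x, c x y| ≤ ∑ y ∈ G.neighborFinset x, |c x y| :=
          abs_sum_le_sum_abs _ _
      _ ≤ ∑ y ∈ G.neighborFinset x, 1 := sum_le_sum fun y _ => hbound x y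
      _ = 1 := by rw [sum_const, card_neighborFinset_eq_degree, hx, one_smul]
  · rcases le_or_gt 2 (G.degree x) with hx2 | hx2
    · rw [hbal x hx2, abs_zero]
    · have : G.neighborFinset x = ∅ := by
        rw [← card_eq_zero, card_neighborFinset_eq_degree]
        omega
      rw [this, sum_empty, abs_zero]

lemma abs_sum_sum_neighborFinset_le_card_leaves (hbound : ∀ x y, |c x y| ≤ 1)
    (hbal : ∀ x, 2 ≤ G.degree x → ∑ y ∈ G.neighborFinset x, c x y = 0) :
    |∑ x with P x, ∑ y ∈ G.neighborFinset x, c x y| ≤ #{x | G.degree x = 1 ∧ P x} := by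
  calc |∑ x with P x, ∑ y ∈ G.neighborFinset x, c x y|
      ≤ ∑ x with P x, |∑ y ∈ G.neighborFinset x, c x y| := abs_sum_le_sum_abs _ _
    _ ≤ ∑ x with P x, if G.degree x = 1 then 1 else 0 :=
        sum_le_sum fun x _ => G.abs_sum_neighborFinset_le_ite hbound hbal x
    _ = #{x | G.degree x = 1 ∧ P x} := by
        rw [sum_boole, filter_filter, filter_congr fun x _ => and_comm]

lemma two_mul_abs_sum_sum_neighborFinset_le_card_leaves
    (hanti : ∀ x y, G.Adj x y → c y x = -c x y) (hbound : ∀ x y, |c x y| ≤ 1)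
    (hbal : ∀ x, 2 ≤ G.degree x → ∑ y ∈ G.neighborFinset x, c x y = 0) :
    2 * |∑ x with P x, ∑ y ∈ G.neighborFinset x, c x y| ≤ #{x | G.degree x = 1} := by
  have hcompl : ∑ x with ¬P x, ∑ y ∈ G.neighborFinset x, c x y
      = -∑ x with P x, ∑ y ∈ G.neighborFinset x, c x y := by
    rw [eq_neg_iff_add_eq_zero, add_comm, sum_filter_add_sum_filter_not,
      G.sum_sum_neighborFinset_eq_zero hanti]
  have hcard : (#{x | G.degree x = 1 ∧ P x} : ℝ) + #{x | G.degree x = 1 ∧ ¬P x}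
      = #{x | G.degree x = 1} := by
    rw [← filter_filter, ← filter_filter, ← Nat.cast_add, card_filter_add_card_filter_not]
  have hP := G.abs_sum_sum_neighborFinset_le_card_leaves P hbound hbal
  have hnotP := G.abs_sum_sum_neighborFinset_le_card_leaves (¬P ·) hbound hbal
  rw [hcompl, abs_neg] at hnotP
  linarith

end SimpleGraph

theorem abs_current_through_cut_le_half_card_leaves_general
    {k : ℕ} {V : Type*} [Fintype V]
    (G : SimpleGraph V) [DecidableRel G.Adj]
    (p : V → EuclideanSpace ℝ (Fin k))
    (hbal : ∀ x : V, 2 ≤ G.degree x →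
      ∑ y ∈ G.neighborFinset x, (‖p x - p y‖)⁻¹ • (p x - p y) = 0)
    (v : EuclideanSpace ℝ (Fin k)) (hv : ‖v‖ = 1) (lam : ℝ)
    (hlam : ∀ x : V, ⟪p x, v⟫ ≠ lam) :
    |∑ x : V, ∑ y ∈ G.neighborFinset x,
        (if ⟪p x, v⟫ < lam ∧ lam < ⟪p y, v⟫
          then ⟪(‖p y - p x‖)⁻¹ • (p y - p x), v⟫ else 0)|
      ≤ (Finset.univ.filter fun l : V => G.degree l = 1).card / 2 := by
  set c : V → V → ℝ := fun x y => ⟪‖p x - p y‖⁻¹ • (p x - p y), v⟫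
  have hanti (x y : V) : c y x = -c x y := by
    simp only [c]
    rw [← neg_sub, norm_neg, smul_neg, inner_neg_left]
  have hbound (x y : V) : |c x y| ≤ 1 := hv ▸ abs_inner_inv_norm_smul_le _ _
  have hbal' (x : V) (hx : 2 ≤ G.degree x) : ∑ y ∈ G.neighborFinset x, c x y = 0 := by
    simp only [c]
    rw [← sum_inner, hbal x hx, inner_zero_left]
  have hcurrent : ∑ x, ∑ y ∈ G.neighborFinset x,
        (if ⟪p x, v⟫ < lam ∧ lam < ⟪p y, v⟫ then c y x else 0)
      = -∑ x with ⟪p x, v⟫ < lam, ∑ y ∈ G.neighborFinset x, c x y := by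
    rw [G.sum_sum_neighborFinset_eq_sum_crossing _ fun x y _ => hanti x y]
    simp only [sum_filter, ite_and, ite_sum_zero, not_lt, ← sum_neg_distrib]
    refine sum_congr rfl fun x _ => sum_congr rfl fun y _ => ?_
    simp only [(hlam y).symm.le_iff_lt]
    rw [hanti]
    split_ifs <;> simp only [neg_zero]
  rw [hcurrent, abs_neg]
  have := G.two_mul_abs_sum_sum_neighborFinset_le_card_leaves (⟪p ·, v⟫ < lam)
    (fun x y _ => hanti x y) hbound hbal'
  linarith

/-- In a finite critical net in `ℝ^k` satisfying the balance
condition, for a unit direction `v` and a level `lam` avoided by all vertices, the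
absolute value of the current through the hyperplane `{⟪·, v⟫ = lam}` (each crossing
edge counted once, with the orientation `x → y` going upward) is at most half the
number of leaves. -/
theorem abs_current_through_cut_le_half_card_leaves
    {k : ℕ} (hk : 1 ≤ k) {V : Type*} [Fintype V] [DecidableEq V]
    (G : SimpleGraph V) [DecidableRel G.Adj]
    (p : V → EuclideanSpace ℝ (Fin k)) (hinj : Function.Injective p)
    (hdeg1 : ∀ x : V, 1 ≤ G.degree x)
    (hnoLL : ∀ x y : V, G.Adj x y → ¬(G.degree x = 1 ∧ G.degree y = 1))
    (hbal : ∀ x : V, 2 ≤ G.degree x →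
      ∑ y ∈ G.neighborFinset x, (‖p x - p y‖)⁻¹ • (p x - p y) = 0)
    (v : EuclideanSpace ℝ (Fin k)) (hv : ‖v‖ = 1) (lam : ℝ)
    (hlam : ∀ x : V, ⟪p x, v⟫ ≠ lam) :
    |∑ x : V, ∑ y ∈ G.neighborFinset x,
        (if ⟪p x, v⟫ < lam ∧ lam < ⟪p y, v⟫
          then ⟪(‖p y - p x‖)⁻¹ • (p y - p x), v⟫ else 0)|
      ≤ (Finset.univ.filter fun l : V => G.degree l = 1).card / 2 :=
  abs_current_through_cut_le_half_card_leaves_general G p hbal v hv lam hlam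
end

section
/- Let (G, p) be a finite critical net in ℝ^k satisfying the balance condition, and assume there is at least one interior vertex. Let (v_1, …, v_k) be an orthonormal basis of EuclideanSpace ℝ (Fin k), and for each i set ℓ_i = (max over interior vertices x of ⟪p x, v_i⟫) − (min over interior vertices x of ⟪p x, v_i⟫). Then the interior length satisfies 2 L ≤ (∑_{i=1}^k ℓ_i²)^{1/2} · |∂X|. -/
open scoped RealInnerProductSpace

/-- Let `(G, p)` be a finite critical net in `ℝ^k` satisfying the
balance condition with at least one interior vertex, and let `v` be an orthonormal
basis of `ℝ^k`. With `ℓ_i` the width of the set of interior vertices in the direction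
`v i`, the interior length `L` (half the sum of `‖p x - p y‖` over ordered pairs of
adjacent interior vertices) satisfies `2 L ≤ (∑ ℓ_i²)^{1/2} · |∂X|`. -/
theorem two_mul_interior_length_le_sqrt_sum_sq_mul_card_leaves
    {k : ℕ} (hk : 1 ≤ k) {V : Type*} [Fintype V] [DecidableEq V]
    (G : SimpleGraph V) [DecidableRel G.Adj]
    (p : V → EuclideanSpace ℝ (Fin k)) (hinj : Function.Injective p)
    (hdeg1 : ∀ x : V, 1 ≤ G.degree x)
    (hnoLL : ∀ x y : V, G.Adj x y → ¬(G.degree x = 1 ∧ G.degree y = 1))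
    (hbal : ∀ x : V, 2 ≤ G.degree x →
      ∑ y ∈ G.neighborFinset x, (‖p x - p y‖)⁻¹ • (p x - p y) = 0)
    (hne : (Finset.univ.filter fun x : V => 2 ≤ G.degree x).Nonempty)
    (v : OrthonormalBasis (Fin k) ℝ (EuclideanSpace ℝ (Fin k))) :
    2 * ((1 / 2 : ℝ) *
        ∑ x ∈ Finset.univ.filter (fun x : V => 2 ≤ G.degree x),
          ∑ y ∈ (G.neighborFinset x).filter (fun y => 2 ≤ G.degree y), ‖p x - p y‖)
      ≤ Real.sqrt (∑ i : Fin k,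
            (((Finset.univ.filter fun x : V => 2 ≤ G.degree x).sup'
                hne fun x => ⟪p x, v i⟫)
              - ((Finset.univ.filter fun x : V => 2 ≤ G.degree x).inf'
                hne fun x => ⟪p x, v i⟫)) ^ 2)
        * (Finset.univ.filter fun l : V => G.degree l = 1).card := by
  classical
  set I : Finset V := Finset.univ.filter (fun x : V => 2 ≤ G.degree x) with hI
  set Lv : Finset V := Finset.univ.filter (fun l : V => G.degree l = 1) with hLvdef
  set M : Fin k → ℝ := fun i => I.sup' hne fun x => ⟪p x, v i⟫ with hM
  set m : Fin k → ℝ := fun i => I.inf' hne fun x => ⟪p x, v i⟫ with hm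
  have hMM : ∀ i : Fin k, (I.sup' hne fun x => ⟪p x, v i⟫) = M i := fun _ => rfl
  have hmm : ∀ i : Fin k, (I.inf' hne fun x => ⟪p x, v i⟫) = m i := fun _ => rfl
  set D : ℝ := Real.sqrt (∑ i : Fin k, (M i - m i) ^ 2) with hDdef
  set c : EuclideanSpace ℝ (Fin k) :=
    ∑ i : Fin k, ((M i + m i) / 2) • (v i : EuclideanSpace ℝ (Fin k)) with hcdef
  have hD0 : 0 ≤ D := Real.sqrt_nonneg _
  have hadj_ne : ∀ {x y : V}, G.Adj x y → ‖p x - p y‖ ≠ 0 := by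
    intro x y h
    have : p x ≠ p y := fun e => (G.ne_of_adj h) (hinj e)
    simp [sub_eq_zero, this]
  -- the ball bound
  have hball : ∀ x ∈ I, ‖p x - c‖ ≤ D / 2 := by
    intro x hx
    have hov : ∀ i j : Fin k, ⟪(v i : EuclideanSpace ℝ (Fin k)), v j⟫ = if i = j then 1 else 0 :=
      orthonormal_iff_ite.mp v.orthonormal
    have hvc : ∀ i : Fin k, ⟪(v i : EuclideanSpace ℝ (Fin k)), c⟫ = (M i + m i) / 2 := by
      intro i
      rw [hcdef, inner_sum, Finset.sum_eq_single i]
      · rw [real_inner_smul_right, hov, if_pos rfl, mul_one]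
      · intro j _ hj
        rw [real_inner_smul_right, hov, if_neg (fun h => hj h.symm), mul_zero]
      · intro h; exact absurd (Finset.mem_univ i) h
    have hrepr : ‖p x - c‖
        = Real.sqrt (∑ i : Fin k, ⟪(v i : EuclideanSpace ℝ (Fin k)), p x - c⟫ ^ 2) := by
      rw [← v.repr.norm_map (p x - c), EuclideanSpace.norm_eq]
      congr 1
      apply Finset.sum_congr rfl
      intro i _
      rw [v.repr_apply_apply, Real.norm_eq_abs, sq_abs]
    have hcoord : ∀ i : Fin k,
        |⟪(v i : EuclideanSpace ℝ (Fin k)), p x - c⟫| ≤ (M i - m i) / 2 := by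
      intro i
      rw [inner_sub_right, hvc i, real_inner_comm]
      have h2 : m i ≤ ⟪p x, v i⟫ := by
        rw [hm]; exact Finset.inf'_le (fun z => ⟪p z, v i⟫) hx
      have h3 : ⟪p x, v i⟫ ≤ M i := by
        rw [hM]; exact Finset.le_sup' (fun z => ⟪p z, v i⟫) hx
      rw [abs_le]; constructor <;> [linarith; linarith]
    rw [hrepr]
    have hstep : ∑ i : Fin k, ⟪(v i : EuclideanSpace ℝ (Fin k)), p x - c⟫ ^ 2
        ≤ (∑ i : Fin k, (M i - m i) ^ 2) / 4 := by
      rw [Finset.sum_div]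
      apply Finset.sum_le_sum
      intro i _
      have h4 : ⟪(v i : EuclideanSpace ℝ (Fin k)), p x - c⟫ ^ 2 ≤ ((M i - m i) / 2) ^ 2 := by
        rw [← sq_abs]
        exact pow_le_pow_left₀ (abs_nonneg _) (hcoord i) 2
      calc ⟪(v i : EuclideanSpace ℝ (Fin k)), p x - c⟫ ^ 2 ≤ ((M i - m i) / 2) ^ 2 := h4
        _ = (M i - m i) ^ 2 / 4 := by ring
    calc Real.sqrt (∑ i : Fin k, ⟪(v i : EuclideanSpace ℝ (Fin k)), p x - c⟫ ^ 2)
        ≤ Real.sqrt ((∑ i : Fin k, (M i - m i) ^ 2) / 4) := Real.sqrt_le_sqrt hstep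
      _ = D / 2 := by
          rw [hDdef, Real.sqrt_div (by positivity) 4, show (4:ℝ) = 2 ^ 2 by norm_num,
            Real.sqrt_sq (by norm_num : (0:ℝ) ≤ 2)]
  -- per-vertex bound
  have hkey : ∀ x ∈ I,
      ∑ y ∈ (G.neighborFinset x).filter (fun y => 2 ≤ G.degree y),
          ⟪p x - c, (‖p x - p y‖)⁻¹ • (p x - p y)⟫
        ≤ (D / 2) * (((G.neighborFinset x).filter (fun y => G.degree y = 1)).card : ℝ) := by
    intro x hx
    have hx2 : 2 ≤ G.degree x := by
      rw [hI] at hx; exact (Finset.mem_filter.mp hx).2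
    have hzero : ∑ y ∈ G.neighborFinset x,
        ⟪p x - c, (‖p x - p y‖)⁻¹ • (p x - p y)⟫ = 0 := by
      rw [← inner_sum, hbal x hx2, inner_zero_right]
    have hsplit := Finset.sum_filter_add_sum_filter_not (G.neighborFinset x)
      (fun y => 2 ≤ G.degree y) (fun y => ⟪p x - c, (‖p x - p y‖)⁻¹ • (p x - p y)⟫)
    have hfe : (G.neighborFinset x).filter (fun y => ¬ 2 ≤ G.degree y)
        = (G.neighborFinset x).filter (fun y => G.degree y = 1) := by
      apply Finset.filter_congr
      intro y _
      have := hdeg1 y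
      constructor <;> intro <;> omega
    rw [hfe] at hsplit
    have heq : ∑ y ∈ (G.neighborFinset x).filter (fun y => 2 ≤ G.degree y),
        ⟪p x - c, (‖p x - p y‖)⁻¹ • (p x - p y)⟫
        = ∑ y ∈ (G.neighborFinset x).filter (fun y => G.degree y = 1),
            (-⟪p x - c, (‖p x - p y‖)⁻¹ • (p x - p y)⟫) := by
      rw [Finset.sum_neg_distrib]
      linarith [hsplit, hzero]
    rw [heq]
    have hb : ∀ y ∈ (G.neighborFinset x).filter (fun y => G.degree y = 1),
        -⟪p x - c, (‖p x - p y‖)⁻¹ • (p x - p y)⟫ ≤ D / 2 := by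
      intro y hy
      have hadj : G.Adj x y :=
        (SimpleGraph.mem_neighborFinset G x y).mp (Finset.mem_of_mem_filter y hy)
      have h1 := abs_real_inner_le_norm (p x - c) ((‖p x - p y‖)⁻¹ • (p x - p y))
      have h2 : ‖(‖p x - p y‖)⁻¹ • (p x - p y)‖ = 1 := by
        rw [norm_smul, Real.norm_eq_abs, abs_inv, abs_norm,
          inv_mul_cancel₀ (hadj_ne hadj)]
      rw [h2, mul_one] at h1
      have h3 := hball x hx
      have h4 := neg_abs_le ⟪p x - c, (‖p x - p y‖)⁻¹ • (p x - p y)⟫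
      linarith
    calc ∑ y ∈ (G.neighborFinset x).filter (fun y => G.degree y = 1),
          (-⟪p x - c, (‖p x - p y‖)⁻¹ • (p x - p y)⟫)
        ≤ ∑ _y ∈ (G.neighborFinset x).filter (fun y => G.degree y = 1), (D / 2) :=
          Finset.sum_le_sum hb
      _ = (D / 2) * (((G.neighborFinset x).filter (fun y => G.degree y = 1)).card : ℝ) := by
          rw [Finset.sum_const, nsmul_eq_mul, mul_comm]
  -- double-sum reindexing
  have hrw : ∀ (Q : V → Prop) (_ : DecidablePred Q) (f : V → V → ℝ),
      (∑ x ∈ I, ∑ y ∈ (G.neighborFinset x).filter (fun y => Q y), f x y)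
        = ∑ q ∈ (Finset.univ ×ˢ Finset.univ).filter
            (fun q : V × V => G.Adj q.1 q.2 ∧ 2 ≤ G.degree q.1 ∧ Q q.2), f q.1 q.2 := by
    intro Q _ f
    rw [show (∑ q ∈ (Finset.univ ×ˢ Finset.univ).filter
              (fun q : V × V => G.Adj q.1 q.2 ∧ 2 ≤ G.degree q.1 ∧ Q q.2), f q.1 q.2)
        = ∑ x : V, ∑ y : V, if G.Adj x y ∧ 2 ≤ G.degree x ∧ Q y then f x y else 0 from by
      rw [Finset.sum_filter, Finset.sum_product]]
    rw [hI, Finset.sum_filter]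
    apply Finset.sum_congr rfl
    intro x _
    by_cases hx : 2 ≤ G.degree x
    · simp only [hx, if_true]
      rw [SimpleGraph.neighborFinset_eq_filter, Finset.filter_filter, Finset.sum_filter]
      apply Finset.sum_congr rfl
      intro y _
      by_cases h1 : G.Adj x y <;> by_cases h2 : Q y <;> simp [h1, h2, hx]
    · simp [hx]
  -- symmetrization
  have hsymm :
      (∑ x ∈ I, ∑ y ∈ (G.neighborFinset x).filter (fun y => 2 ≤ G.degree y), ‖p x - p y‖)
        = 2 * ∑ x ∈ I, ∑ y ∈ (G.neighborFinset x).filter (fun y => 2 ≤ G.degree y),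
            ⟪p x - c, (‖p x - p y‖)⁻¹ • (p x - p y)⟫ := by
    rw [hrw _ inferInstance (fun x y => ‖p x - p y‖),
      hrw _ inferInstance (fun x y => ⟪p x - c, (‖p x - p y‖)⁻¹ • (p x - p y)⟫)]
    set S : Finset (V × V) := (Finset.univ ×ˢ Finset.univ).filter
      (fun q : V × V => G.Adj q.1 q.2 ∧ 2 ≤ G.degree q.1 ∧ 2 ≤ G.degree q.2) with hSdef
    have hSmem : ∀ q : V × V, q ∈ S →
        G.Adj q.1 q.2 ∧ 2 ≤ G.degree q.1 ∧ 2 ≤ G.degree q.2 := by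
      intro q hq
      rw [hSdef, Finset.mem_filter] at hq
      exact hq.2
    have hswap : ∀ g : V → V → ℝ, ∑ q ∈ S, g q.1 q.2 = ∑ q ∈ S, g q.2 q.1 := by
      intro g
      apply Finset.sum_nbij' (i := Prod.swap) (j := Prod.swap)
      · intro q hq
        obtain ⟨h1, h2, h3⟩ := hSmem q hq
        rw [hSdef, Finset.mem_filter]
        exact ⟨Finset.mk_mem_product (Finset.mem_univ _) (Finset.mem_univ _), h1.symm, h3, h2⟩
      · intro q hq
        obtain ⟨h1, h2, h3⟩ := hSmem q hq
        rw [hSdef, Finset.mem_filter]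
        exact ⟨Finset.mk_mem_product (Finset.mem_univ _) (Finset.mem_univ _), h1.symm, h3, h2⟩
      · intro q _; rfl
      · intro q _; rfl
      · intro q _; rfl
    have hterm : ∀ q : V × V, q ∈ S →
        (fun x y => ‖p x - p y‖) q.1 q.2
          = ⟪p q.1 - c, (‖p q.1 - p q.2‖)⁻¹ • (p q.1 - p q.2)⟫
            + ⟪p q.2 - c, (‖p q.2 - p q.1‖)⁻¹ • (p q.2 - p q.1)⟫ := by
      intro q hq
      obtain ⟨h1, -, -⟩ := hSmem q hq
      have hr : ‖p q.2 - p q.1‖ = ‖p q.1 - p q.2‖ := norm_sub_rev _ _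
      have he : p q.2 - p q.1 = -(p q.1 - p q.2) := by abel
      rw [real_inner_smul_right, real_inner_smul_right, hr, he, inner_neg_right]
      have e2 : ⟪p q.1 - c, p q.1 - p q.2⟫ - ⟪p q.2 - c, p q.1 - p q.2⟫
          = ⟪p q.1 - p q.2, p q.1 - p q.2⟫ := by
        rw [← inner_sub_left]
        congr 1
        abel
      have e3 : ⟪p q.1 - p q.2, p q.1 - p q.2⟫ = ‖p q.1 - p q.2‖ ^ 2 :=
        real_inner_self_eq_norm_sq _
      have hnz := hadj_ne h1
      have h5 : ⟪p q.1 - c, p q.1 - p q.2⟫ - ⟪p q.2 - c, p q.1 - p q.2⟫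
          = ‖p q.1 - p q.2‖ ^ 2 := e2.trans e3
      have hr1 : (‖p q.1 - p q.2‖)⁻¹ * ‖p q.1 - p q.2‖ = 1 := inv_mul_cancel₀ hnz
      linear_combination (-(‖p q.1 - p q.2‖)⁻¹) * h5 - ‖p q.1 - p q.2‖ * hr1
    rw [Finset.sum_congr rfl hterm, Finset.sum_add_distrib,
      ← hswap (fun x y => ⟪p x - c, (‖p x - p y‖)⁻¹ • (p x - p y)⟫), two_mul]
  -- leaf count
  have hcount :
      (∑ x ∈ I, (((G.neighborFinset x).filter (fun y => G.degree y = 1)).card : ℝ))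
        = (Lv.card : ℝ) := by
    have h1 := hrw (fun y => G.degree y = 1) inferInstance (fun _ _ => (1 : ℝ))
    have h2 : (∑ x ∈ I, (((G.neighborFinset x).filter (fun y => G.degree y = 1)).card : ℝ))
        = ∑ x ∈ I, ∑ _y ∈ (G.neighborFinset x).filter (fun y => G.degree y = 1), (1 : ℝ) := by
      apply Finset.sum_congr rfl
      intro x _
      rw [Finset.sum_const, nsmul_eq_mul, mul_one]
    rw [h2, h1, Finset.sum_const, nsmul_eq_mul, mul_one]
    congr 1
    apply Finset.card_bij (fun (q : V × V) _ => q.2)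
    · intro q hq
      simp only [Finset.mem_filter, Finset.mem_product] at hq
      rw [hLvdef, Finset.mem_filter]
      exact ⟨Finset.mem_univ _, hq.2.2.2⟩
    · intro q1 h1' q2 h2' he
      simp only [Finset.mem_filter, Finset.mem_product] at h1' h2'
      obtain ⟨-, hadj1, -, hd1⟩ := h1'
      obtain ⟨-, hadj2, -, hd2⟩ := h2'
      have hc1 : (G.neighborFinset q1.2).card = 1 := by
        rw [G.card_neighborFinset_eq_degree]; exact hd1
      obtain ⟨a, ha⟩ := Finset.card_eq_one.mp hc1
      have e1 : q1.1 = a := by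
        have : q1.1 ∈ G.neighborFinset q1.2 :=
          (SimpleGraph.mem_neighborFinset G _ _).mpr hadj1.symm
        rw [ha, Finset.mem_singleton] at this
        exact this
      have e2 : q2.1 = a := by
        have : q2.1 ∈ G.neighborFinset q1.2 := by
          rw [he]
          exact (SimpleGraph.mem_neighborFinset G _ _).mpr hadj2.symm
        rw [ha, Finset.mem_singleton] at this
        exact this
      exact Prod.ext (e1.trans e2.symm) he
    · intro l hl
      rw [hLvdef, Finset.mem_filter] at hl
      have hdl : G.degree l = 1 := hl.2
      have hc1 : (G.neighborFinset l).card = 1 := by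
        rw [G.card_neighborFinset_eq_degree]; exact hdl
      obtain ⟨a, ha⟩ := Finset.card_eq_one.mp hc1
      have hadj : G.Adj l a := by
        have : a ∈ G.neighborFinset l := by rw [ha]; exact Finset.mem_singleton_self a
        exact (SimpleGraph.mem_neighborFinset G _ _).mp this
      have hda : 2 ≤ G.degree a := by
        have h1 := hdeg1 a
        have h2 := hnoLL a l hadj.symm
        omega
      refine ⟨(a, l), ?_, rfl⟩
      simp only [Finset.mem_filter, Finset.mem_product]
      exact ⟨⟨Finset.mem_univ _, Finset.mem_univ _⟩, hadj.symm, hda, hdl⟩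
  -- assembly
  have hmain := Finset.sum_le_sum hkey
  calc 2 * ((1 / 2 : ℝ) *
        ∑ x ∈ I, ∑ y ∈ (G.neighborFinset x).filter (fun y => 2 ≤ G.degree y), ‖p x - p y‖)
      = ∑ x ∈ I, ∑ y ∈ (G.neighborFinset x).filter (fun y => 2 ≤ G.degree y), ‖p x - p y‖ := by
        ring
    _ = 2 * ∑ x ∈ I, ∑ y ∈ (G.neighborFinset x).filter (fun y => 2 ≤ G.degree y),
            ⟪p x - c, (‖p x - p y‖)⁻¹ • (p x - p y)⟫ := hsymm
    _ ≤ 2 * ∑ x ∈ I, (D / 2) * (((G.neighborFinset x).filter (fun y => G.degree y = 1)).card : ℝ) := by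
        linarith [hmain]
    _ = D * ∑ x ∈ I, (((G.neighborFinset x).filter (fun y => G.degree y = 1)).card : ℝ) := by
        rw [← Finset.mul_sum]; ring
    _ = D * Lv.card := by rw [hcount]
end

section
/- Let (G, p) be a finite critical net in ℝ^k satisfying the balance condition. Let (v_1, …, v_k) be an orthonormal basis of EuclideanSpace ℝ (Fin k) such that for each i, every edge {x,y} of G with both endpoints interior satisfies ⟪p y − p x, v_i⟫ ≠ 0. For each i let D_i ∈ ℕ be such that every sequence x_0, x_1, …, x_m of interior vertices with x_j adjacent to x_{j+1} and ⟪p x_{j+1} − p x_j, v_i⟫ > 0 for all 0 ≤ j < m satisfies m ≤ D_i. Then the sum of the degrees of the interior vertices satisfies ∑_{x interior} deg_G(x) ≤ 2 |∂X| + (∑_{i=1}^k D_i²)^{1/2} · |∂X|. -/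
/-!
For each axis `v i` let `h i x` be the length of the longest ascending path of interior vertices
ending at `x`: it lies in `[0, D i]` and increases strictly along every ascending edge. Hence the
potential `ψ x = ∑ i, (h i x - D i / 2) • v i` has norm at most `√(∑ D i²) / 2`, while along an
interior edge with unit direction `u` each coordinate of `ψ x - ψ y` has the sign of `⟪u, v i⟫`
and size at least one, so `⟪ψ x - ψ y, u⟫ ≥ ∑ ⟪u, v i⟫² = 1`. Summing over interior edges and
using the balance condition to trade the interior unit vectors at `x` for the leaf ones, the
interior–interior incidences number at most `√(∑ D i²)` times the leaf edges, and there are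
exactly `|∂X|` leaf edges since every leaf has a single neighbour, which is interior.
-/

open scoped RealInnerProductSpace
open Finset

section ChainHeight

variable {α : Type*} (r : α → α → Prop)

def chainLengthsTo (x : α) : Set ℕ :=
  {m | ∃ c : ℕ → α, c m = x ∧ ∀ j < m, r (c j) (c (j + 1))}

/-- Junk value `0` when the chain lengths ending at `x` are unbounded. -/
noncomputable def chainHeight (x : α) : ℕ :=
  sSup (chainLengthsTo r x)

variable {r} {D : ℕ} (hD : ∀ m (c : ℕ → α), (∀ j < m, r (c j) (c (j + 1))) → m ≤ D)
include hD

theorem chainHeight_le (x : α) : chainHeight r x ≤ D :=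
  csSup_le' fun _ ⟨c, _, hc⟩ => hD _ c hc

theorem chainHeight_lt_of_rel {x y : α} (hxy : r x y) : chainHeight r x < chainHeight r y := by
  have hbdd (z : α) : BddAbove (chainLengthsTo r z) := ⟨D, fun _ ⟨c, _, hc⟩ => hD _ c hc⟩
  obtain ⟨c, hcx, hc⟩ : chainHeight r x ∈ chainLengthsTo r x :=
    Nat.sSup_mem ⟨0, fun _ => x, rfl, by simp⟩ (hbdd x)
  refine Nat.lt_of_succ_le (le_csSup (hbdd y)
    ⟨Function.update c (chainHeight r x + 1) y, by simp, fun j hj => ?_⟩)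
  rcases Nat.lt_succ_iff_lt_or_eq.1 hj with hj | rfl
  · simpa [Function.update_of_ne (by omega : j ≠ chainHeight r x + 1),
      Function.update_of_ne (by omega : j + 1 ≠ chainHeight r x + 1)] using hc j hj
  · simpa [hcx] using hxy

end ChainHeight

section Coordinates

variable {ι E : Type*} [Fintype ι] [NormedAddCommGroup E] [InnerProductSpace ℝ E]

theorem inner_repr_symm_toLp (b : OrthonormalBasis ι ℝ E) (f : ι → ℝ) (i : ι) :
    ⟪b.repr.symm (WithLp.toLp 2 f), b i⟫ = f i := by
  rw [real_inner_comm, ← b.repr_apply_apply, LinearIsometryEquiv.apply_symm_apply]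

theorem norm_repr_symm_toLp_le (b : OrthonormalBasis ι ℝ E) {f g : ι → ℝ}
    (h : ∀ i, |f i| ≤ g i) : ‖b.repr.symm (WithLp.toLp 2 f)‖ ≤ √(∑ i, g i ^ 2) := by
  rw [LinearIsometryEquiv.norm_map, EuclideanSpace.norm_eq]
  gcongr with i
  simpa using h i

theorem sq_le_mul_of_abs_le_one {t s : ℝ} (ht : |t| ≤ 1) (hpos : 0 < t → 1 ≤ s)
    (hneg : t < 0 → s ≤ -1) : t ^ 2 ≤ s * t := by
  rcases lt_trichotomy t 0 with h | rfl | h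
  · nlinarith [neg_abs_le t, hneg h]
  · simp
  · nlinarith [le_abs_self t, hpos h]

theorem one_le_inner_inv_norm_smul (b : OrthonormalBasis ι ℝ E) {d z : E} (hz : z ≠ 0)
    (hpos : ∀ i, 0 < ⟪z, b i⟫ → 1 ≤ ⟪d, b i⟫) (hneg : ∀ i, ⟪z, b i⟫ < 0 → ⟪d, b i⟫ ≤ -1) :
    1 ≤ ⟪d, ‖z‖⁻¹ • z⟫ := by
  set u := ‖z‖⁻¹ • z
  have hu : ‖u‖ = 1 := norm_smul_inv_norm hz
  have hcoord (i : ι) : ⟪u, b i⟫ = ‖z‖⁻¹ * ⟪z, b i⟫ := real_inner_smul_left _ _ _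
  have hz' : 0 < ‖z‖⁻¹ := inv_pos.2 (norm_pos_iff.2 hz)
  have hterm (i : ι) : ⟪u, b i⟫ ^ 2 ≤ ⟪d, b i⟫ * ⟪u, b i⟫ := by
    refine sq_le_mul_of_abs_le_one ?_ (fun h => hpos i ?_) (fun h => hneg i ?_)
    · simpa [hu, b.orthonormal.1 i] using abs_real_inner_le_norm u (b i)
    · rw [hcoord] at h; exact pos_of_mul_pos_right h hz'.le
    · rw [hcoord] at h; exact neg_of_mul_neg_right h hz'.le
  calc 1 = ⟪u, u⟫ := by rw [real_inner_self_eq_norm_sq, hu, one_pow]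
    _ = ∑ i, ⟪u, b i⟫ ^ 2 := by
      rw [← b.sum_inner_mul_inner]; simp only [real_inner_comm u, sq]
    _ ≤ ∑ i, ⟪d, b i⟫ * ⟪u, b i⟫ := sum_le_sum fun i _ => hterm i
    _ = ⟪d, u⟫ := by rw [← b.sum_inner_mul_inner]; simp only [real_inner_comm u]

end Coordinates

namespace SimpleGraph

variable {V : Type*} [Fintype V] [DecidableEq V] (G : SimpleGraph V) [DecidableRel G.Adj]

theorem sum_card_neighborFinset_inter_comm (s t : Finset V) :
    ∑ x ∈ s, #(G.neighborFinset x ∩ t) = ∑ y ∈ t, #(G.neighborFinset y ∩ s) := by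
  have hfilter (x : V) (u : Finset V) : G.neighborFinset x ∩ u = u.filter (G.Adj x) := by
    ext; simp [and_comm]
  simp only [hfilter]
  exact (sum_card_bipartiteAbove_eq_sum_card_bipartiteBelow G.Adj).trans
    (by simp only [bipartiteBelow, G.adj_comm])

theorem sum_card_neighborFinset_sdiff {s : Finset V} (hdeg : ∀ l ∉ s, G.degree l = 1)
    (hnbr : ∀ l ∉ s, ∀ x, G.Adj l x → x ∈ s) :
    ∑ x ∈ s, #(G.neighborFinset x \ s) = #sᶜ := by
  have hone (l : V) (hl : l ∈ sᶜ) : #(G.neighborFinset l ∩ s) = 1 := by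
    rw [mem_compl] at hl
    rw [inter_eq_left.2 fun x hx => hnbr l hl x ((G.mem_neighborFinset l x).1 hx),
      card_neighborFinset_eq_degree, hdeg l hl]
  simp only [sdiff_eq_inter_compl]
  rw [sum_card_neighborFinset_inter_comm, sum_congr rfl hone, card_eq_sum_ones]

variable {E : Type*} [NormedAddCommGroup E] [InnerProductSpace ℝ E]

theorem sum_sum_inner_sub_eq_two_mul (p φ : V → E) (s : Finset V) :
    ∑ x ∈ s, ∑ y ∈ G.neighborFinset x ∩ s, ⟪φ x - φ y, ‖p x - p y‖⁻¹ • (p x - p y)⟫ =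
      2 * ∑ x ∈ s, ∑ y ∈ G.neighborFinset x ∩ s, ⟪φ x, ‖p x - p y‖⁻¹ • (p x - p y)⟫ := by
  have hanti (x y : V) : ⟪φ x - φ y, ‖p x - p y‖⁻¹ • (p x - p y)⟫ =
      ⟪φ x, ‖p x - p y‖⁻¹ • (p x - p y)⟫ + ⟪φ y, ‖p y - p x‖⁻¹ • (p y - p x)⟫ := by
    rw [norm_sub_rev (p y), ← neg_sub (p x), smul_neg, inner_neg_right, inner_sub_left,
      sub_eq_add_neg]
  have hswap : ∑ x ∈ s, ∑ y ∈ G.neighborFinset x ∩ s, ⟪φ y, ‖p y - p x‖⁻¹ • (p y - p x)⟫ =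
      ∑ x ∈ s, ∑ y ∈ G.neighborFinset x ∩ s, ⟪φ x, ‖p x - p y‖⁻¹ • (p x - p y)⟫ :=
    sum_comm' fun x y => by simp only [mem_inter, mem_neighborFinset, G.adj_comm]; tauto
  simp only [hanti, sum_add_distrib, hswap]
  ring

theorem sum_inner_le_of_sum_eq_zero (p : V → E) (w : E) (s : Finset V) {x : V}
    (hbal : ∑ y ∈ G.neighborFinset x, ‖p x - p y‖⁻¹ • (p x - p y) = 0) :
    ∑ y ∈ G.neighborFinset x ∩ s, ⟪w, ‖p x - p y‖⁻¹ • (p x - p y)⟫ ≤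
      ‖w‖ * #(G.neighborFinset x \ s) := by
  have hsplit : ∑ y ∈ G.neighborFinset x ∩ s, ‖p x - p y‖⁻¹ • (p x - p y) =
      -∑ y ∈ G.neighborFinset x \ s, ‖p x - p y‖⁻¹ • (p x - p y) :=
    eq_neg_of_add_eq_zero_left ((sum_inter_add_sum_sdiff _ _ _).trans hbal)
  have hunit (y : V) : ‖‖p x - p y‖⁻¹ • (p x - p y)‖ ≤ 1 := by
    rcases eq_or_ne (p x - p y) 0 with h | h
    · simp [h]
    · exact (norm_smul_inv_norm h).le
  calc ∑ y ∈ G.neighborFinset x ∩ s, ⟪w, ‖p x - p y‖⁻¹ • (p x - p y)⟫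
      = ⟪w, -∑ y ∈ G.neighborFinset x \ s, ‖p x - p y‖⁻¹ • (p x - p y)⟫ := by
        rw [← hsplit, inner_sum]
    _ ≤ ‖w‖ * ‖∑ y ∈ G.neighborFinset x \ s, ‖p x - p y‖⁻¹ • (p x - p y)‖ := by
        rw [← norm_neg (∑ y ∈ _, _)]; exact real_inner_le_norm _ _
    _ ≤ ‖w‖ * #(G.neighborFinset x \ s) := by
        gcongr
        simpa using norm_sum_le_of_le _ fun y _ => hunit y

theorem sum_card_neighborFinset_inter_le (p φ : V → E) {s : Finset V} {R : ℝ}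
    (hbal : ∀ x ∈ s, ∑ y ∈ G.neighborFinset x, ‖p x - p y‖⁻¹ • (p x - p y) = 0)
    (hφ : ∀ x ∈ s, ‖φ x‖ ≤ R)
    (hedge : ∀ x ∈ s, ∀ y ∈ s, G.Adj x y → 1 ≤ ⟪φ x - φ y, ‖p x - p y‖⁻¹ • (p x - p y)⟫) :
    ∑ x ∈ s, (#(G.neighborFinset x ∩ s) : ℝ) ≤
      2 * R * ∑ x ∈ s, (#(G.neighborFinset x \ s) : ℝ) := by
  calc ∑ x ∈ s, (#(G.neighborFinset x ∩ s) : ℝ)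
      ≤ ∑ x ∈ s, ∑ y ∈ G.neighborFinset x ∩ s, ⟪φ x - φ y, ‖p x - p y‖⁻¹ • (p x - p y)⟫ := by
        refine sum_le_sum fun x hx => ?_
        rw [card_eq_sum_ones, Nat.cast_sum, Nat.cast_one]
        refine sum_le_sum fun y hy => ?_
        rw [mem_inter, mem_neighborFinset] at hy
        exact hedge x hx y hy.2 hy.1
    _ = 2 * ∑ x ∈ s, ∑ y ∈ G.neighborFinset x ∩ s, ⟪φ x, ‖p x - p y‖⁻¹ • (p x - p y)⟫ :=
        G.sum_sum_inner_sub_eq_two_mul p φ s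
    _ ≤ 2 * ∑ x ∈ s, R * #(G.neighborFinset x \ s) := by
        gcongr with x hx
        exact (G.sum_inner_le_of_sum_eq_zero p (φ x) s (hbal x hx)).trans (by gcongr; exact hφ x hx)
    _ = 2 * R * ∑ x ∈ s, (#(G.neighborFinset x \ s) : ℝ) := by
        simp only [mul_sum, mul_assoc]

end SimpleGraph

section CriticalNet

variable {V ι E : Type*} [Fintype V] (G : SimpleGraph V) [DecidableRel G.Adj]
  [NormedAddCommGroup E] [InnerProductSpace ℝ E] (p : V → E)

def IsAscendingEdge (w : E) (x y : V) : Prop :=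
  2 ≤ G.degree x ∧ 2 ≤ G.degree y ∧ G.Adj x y ∧ 0 < ⟪p y - p x, w⟫

variable {G p}

theorem length_le_of_isAscendingEdge {w : E} {D : ℕ}
    (hD : ∀ m : ℕ, ∀ c : ℕ → V, (∀ j ≤ m, 2 ≤ G.degree (c j)) →
      (∀ j < m, G.Adj (c j) (c (j + 1)) ∧ 0 < ⟪p (c (j + 1)) - p (c j), w⟫) → m ≤ D)
    {m : ℕ} {c : ℕ → V} (hc : ∀ j < m, IsAscendingEdge G p w (c j) (c (j + 1))) : m ≤ D := by
  rcases Nat.eq_zero_or_pos m with rfl | hm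
  · exact Nat.zero_le D
  refine hD m c (fun j hj => ?_) fun j hj => ⟨(hc j hj).2.2.1, (hc j hj).2.2.2⟩
  rcases hj.lt_or_eq with hj | rfl
  · exact (hc j hj).1
  · have := (hc (j - 1) (by omega)).2.1
    rwa [Nat.sub_add_cancel hm] at this

variable (G p) [Fintype ι]

/-- Centring the heights at `D i / 2` halves the bound on the norm. -/
noncomputable def heightPotential (b : OrthonormalBasis ι ℝ E) (D : ι → ℕ) (x : V) : E :=
  b.repr.symm (WithLp.toLp 2 fun i => (chainHeight (IsAscendingEdge G p (b i)) x : ℝ) - D i / 2)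

variable {G p} {b : OrthonormalBasis ι ℝ E} {D : ι → ℕ}
  (hD : ∀ i m (c : ℕ → V), (∀ j < m, IsAscendingEdge G p (b i) (c j) (c (j + 1))) → m ≤ D i)
include hD

theorem norm_heightPotential_le (x : V) :
    ‖heightPotential G p b D x‖ ≤ √(∑ i, (D i : ℝ) ^ 2) / 2 := by
  calc ‖heightPotential G p b D x‖ ≤ √(∑ i, ((D i : ℝ) / 2) ^ 2) := by
        refine norm_repr_symm_toLp_le b fun i => abs_le.2 ⟨?_, ?_⟩
        · linarith [(chainHeight (IsAscendingEdge G p (b i)) x).cast_nonneg (α := ℝ)]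
        · linarith [(Nat.cast_le (α := ℝ)).2 (chainHeight_le (hD i) x)]
    _ = √((√(∑ i, (D i : ℝ) ^ 2) / 2) ^ 2) := by
        rw [div_pow, Real.sq_sqrt (by positivity), sum_div]
        simp only [div_pow]
    _ = √(∑ i, (D i : ℝ) ^ 2) / 2 := Real.sqrt_sq (by positivity)

theorem one_le_inner_heightPotential_sub {x y : V} (hx : 2 ≤ G.degree x) (hy : 2 ≤ G.degree y)
    (hxy : G.Adj x y) (hp : p x ≠ p y) :
    1 ≤ ⟪heightPotential G p b D x - heightPotential G p b D y,
      ‖p x - p y‖⁻¹ • (p x - p y)⟫ := by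
  set h := fun i => chainHeight (IsAscendingEdge G p (b i))
  have hcoord (i : ι) : ⟪heightPotential G p b D x - heightPotential G p b D y, b i⟫ =
      (h i x : ℝ) - h i y := by
    simp only [heightPotential, inner_sub_left, inner_repr_symm_toLp]
    ring
  refine one_le_inner_inv_norm_smul b (sub_ne_zero.2 hp) (fun i hi => ?_) fun i hi => ?_
  · have hlt : (h i y : ℝ) + 1 ≤ h i x := by
      exact_mod_cast chainHeight_lt_of_rel (hD i) ⟨hy, hx, hxy.symm, hi⟩
    linarith [hcoord i]
  · have hlt : (h i x : ℝ) + 1 ≤ h i y := by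
      exact_mod_cast chainHeight_lt_of_rel (hD i)
        ⟨hx, hy, hxy, by rwa [← neg_sub, inner_neg_left, neg_pos]⟩
    linarith [hcoord i]

end CriticalNet

theorem sum_interior_degrees_le_general
    {k : ℕ} {V : Type*} [Fintype V] [DecidableEq V]
    (G : SimpleGraph V) [DecidableRel G.Adj]
    (p : V → EuclideanSpace ℝ (Fin k)) (hinj : Function.Injective p)
    (hdeg1 : ∀ x : V, 1 ≤ G.degree x)
    (hnoLL : ∀ x y : V, G.Adj x y → ¬(G.degree x = 1 ∧ G.degree y = 1))
    (hbal : ∀ x : V, 2 ≤ G.degree x →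
      ∑ y ∈ G.neighborFinset x, (‖p x - p y‖)⁻¹ • (p x - p y) = 0)
    (v : OrthonormalBasis (Fin k) ℝ (EuclideanSpace ℝ (Fin k)))
    (D : Fin k → ℕ)
    (hD : ∀ i : Fin k, ∀ m : ℕ, ∀ c : ℕ → V,
      (∀ j ≤ m, 2 ≤ G.degree (c j)) →
      (∀ j < m, G.Adj (c j) (c (j + 1)) ∧ 0 < ⟪p (c (j + 1)) - p (c j), v i⟫) →
      m ≤ D i) :
    ((∑ x ∈ Finset.univ.filter (fun x : V => 2 ≤ G.degree x), G.degree x : ℕ) : ℝ)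
      ≤ 2 * (Finset.univ.filter fun l : V => G.degree l = 1).card
        + Real.sqrt (∑ i : Fin k, (D i : ℝ) ^ 2)
          * (Finset.univ.filter fun l : V => G.degree l = 1).card := by
  set I := univ.filter fun x : V => 2 ≤ G.degree x
  have hI (x : V) : x ∈ I ↔ 2 ≤ G.degree x := by simp [I]
  have hleaf (l : V) (hl : l ∉ I) : G.degree l = 1 := by
    have := hdeg1 l; rw [hI] at hl; omega
  have hcompl : Iᶜ = univ.filter fun l : V => G.degree l = 1 := by
    ext l; have := hdeg1 l; rw [mem_compl, hI]; simp only [mem_filter, mem_univ, true_and]; omega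
  have hleaves : ∑ x ∈ I, #(G.neighborFinset x \ I) = #Iᶜ :=
    G.sum_card_neighborFinset_sdiff hleaf fun l hl x hlx => by
      have := hdeg1 x; have := hnoLL l x hlx; have := hleaf l hl; rw [hI]; omega
  have hchain : ∀ i m (c : ℕ → V), (∀ j < m, IsAscendingEdge G p (v i) (c j) (c (j + 1))) →
      m ≤ D i := fun i _ _ => length_le_of_isAscendingEdge (hD i)
  have hinterior := G.sum_card_neighborFinset_inter_le (s := I) p (heightPotential G p v D)
    (fun x hx => hbal x ((hI x).1 hx)) (fun x _ => norm_heightPotential_le hchain x)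
    fun x hx y hy hxy => one_le_inner_heightPotential_sub hchain ((hI x).1 hx) ((hI y).1 hy) hxy
      (hinj.ne hxy.ne)
  have hdeg : ∑ x ∈ I, G.degree x = ∑ x ∈ I, #(G.neighborFinset x ∩ I) +
      ∑ x ∈ I, #(G.neighborFinset x \ I) := by
    simp only [← sum_add_distrib, card_inter_add_card_sdiff, G.card_neighborFinset_eq_degree]
  rw [← hcompl, hdeg, ← hleaves]
  push_cast
  have hL : 0 ≤ ∑ x ∈ I, (#(G.neighborFinset x \ I) : ℝ) :=
    sum_nonneg fun _ _ => Nat.cast_nonneg _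
  linarith

/-- Let `(G, p)` be a finite critical net in `ℝ^k` satisfying the
balance condition, and let `v` be an orthonormal basis such that no edge between two
interior vertices is perpendicular to any `v i`.  If `D i` bounds the length of every
path of interior vertices whose successive edges have positive inner product with
`v i`, then the sum of the degrees of the interior vertices is at most
`2|∂X| + (∑ D_i²)^{1/2} |∂X|`. -/
theorem sum_interior_degrees_le
    {k : ℕ} (hk : 1 ≤ k) {V : Type*} [Fintype V] [DecidableEq V]
    (G : SimpleGraph V) [DecidableRel G.Adj]
    (p : V → EuclideanSpace ℝ (Fin k)) (hinj : Function.Injective p)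
    (hdeg1 : ∀ x : V, 1 ≤ G.degree x)
    (hnoLL : ∀ x y : V, G.Adj x y → ¬(G.degree x = 1 ∧ G.degree y = 1))
    (hbal : ∀ x : V, 2 ≤ G.degree x →
      ∑ y ∈ G.neighborFinset x, (‖p x - p y‖)⁻¹ • (p x - p y) = 0)
    (v : OrthonormalBasis (Fin k) ℝ (EuclideanSpace ℝ (Fin k)))
    (hv : ∀ i : Fin k, ∀ x y : V, G.Adj x y → 2 ≤ G.degree x → 2 ≤ G.degree y →
      ⟪p y - p x, v i⟫ ≠ 0)
    (D : Fin k → ℕ)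
    (hD : ∀ i : Fin k, ∀ m : ℕ, ∀ c : ℕ → V,
      (∀ j ≤ m, 2 ≤ G.degree (c j)) →
      (∀ j < m, G.Adj (c j) (c (j + 1)) ∧ 0 < ⟪p (c (j + 1)) - p (c j), v i⟫) →
      m ≤ D i) :
    ((∑ x ∈ Finset.univ.filter (fun x : V => 2 ≤ G.degree x), G.degree x : ℕ) : ℝ)
      ≤ 2 * (Finset.univ.filter fun l : V => G.degree l = 1).card
        + Real.sqrt (∑ i : Fin k, (D i : ℝ) ^ 2)
          * (Finset.univ.filter fun l : V => G.degree l = 1).card :=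
  sum_interior_degrees_le_general G p hinj hdeg1 hnoLL hbal v D hD
end

section
/- Let (G, p) be a finite critical net in ℝ^k satisfying the balance condition, and let r > 0 be such that: ‖p x‖ ≠ r for every vertex x; ‖p l‖ > r for every leaf l; and for every edge {x,y} of G, every point q of the segment [p x, p y] with ‖q‖ = r satisfies ⟪q, p y − p x⟫ ≠ 0. Then the length of the net inside the closed ball of radius r about the origin equals the sum over all sphere-crossing points of the inner product of the crossing point with the outward unit edge direction: ∑_{edges {x,y}} μ¹([p x, p y] ∩ closedBall(0,r)) = ∑_{edges {x,y}} ∑_{q ∈ [p x, p y], ‖q‖ = r} ⟪q, w_q⟫, where μ¹ is the one-dimensional Hausdorff measure and, for a crossing point q on the edge {x,y}, w_q = (p y − p x)/‖p y − p x‖ if ⟪q, p y − p x⟫ > 0 and w_q = (p x − p y)/‖p y − p x‖ otherwise (so w_q is the unit direction of the edge at q pointing out of the ball). -/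
/-!
Parametrize an edge by arclength from the foot of the perpendicular dropped from the origin,
`σ ↦ p₀ + σ • u` with `⟪p₀, u⟫ = 0` and `‖u‖ = 1`. Then `‖p₀ + σ • u‖ ^ 2 = ‖p₀‖ ^ 2 + σ ^ 2` and
`⟪p₀ + σ • u, u⟫ = σ`, so the part of the edge inside the ball is the interval `[s, t] ∩ [-ρ, ρ]`
with `ρ ^ 2 = r ^ 2 - ‖p₀‖ ^ 2`, and its length telescopes into boundary terms: `|σ| = ρ` at each
crossing point `σ = ±ρ`, and `-s`, resp. `t`, when the endpoint `s`, resp. `t`, lies inside.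
Summed over the darts of the net, the endpoint terms at a vertex `x` inside the ball add up to
`⟪p x, ∑ y, ‖p x - p y‖⁻¹ • (p x - p y)⟫`, which vanishes by the balance condition, since
leaves lie outside the ball.
-/

open scoped RealInnerProductSpace
open Set MeasureTheory

theorem toReal_volume_Icc_sq_le {s t D : ℝ} (hst : s ≤ t) (hs : s ^ 2 ≠ D) (ht : t ^ 2 ≠ D) :
    (volume {σ ∈ Icc s t | σ ^ 2 ≤ D}).toReal =
      (∑ᶠ σ ∈ {σ ∈ Icc s t | σ ^ 2 = D}, |σ|)
        + (if s ^ 2 < D then -s else 0) + (if t ^ 2 < D then t else 0) := by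
  rcases le_or_gt D 0 with hD | hD
  · have hsub : {σ ∈ Icc s t | σ ^ 2 ≤ D} ⊆ {0} := fun σ hσ => by
      simpa using (pow_eq_zero_iff two_ne_zero).1 (le_antisymm (hσ.2.trans hD) (sq_nonneg σ))
    have hcross : ∀ σ ∈ {σ ∈ Icc s t | σ ^ 2 = D}, |σ| = 0 := fun σ hσ => by
      simpa using hsub ⟨hσ.1, hσ.2.le⟩
    rw [measure_mono_null hsub Real.volume_singleton, finsum_mem_eq_zero_of_forall_eq_zero hcross,
      if_neg (by nlinarith), if_neg (by nlinarith)]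
    simp
  · set ρ := √D
    have hρ : 0 < ρ := Real.sqrt_pos.2 hD
    have hball : {σ ∈ Icc s t | σ ^ 2 ≤ D} = Icc (max s (-ρ)) (min t ρ) := by
      ext σ; simp only [mem_sep_iff, Real.sq_le hD.le, ← Icc_inter_Icc]; rfl
    have hsphere : {σ ∈ Icc s t | σ ^ 2 = D} = ↑(({-ρ, ρ} : Finset ℝ).filter (· ∈ Icc s t)) := by
      ext σ
      rw [← Real.sq_sqrt hD.le]
      simp only [Finset.coe_filter, Finset.mem_insert, Finset.mem_singleton,
        sq_eq_sq_iff_eq_or_eq_neg, mem_ofPred_eq]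
      tauto
    have hs' : s ≠ ρ := fun h => hs (by simp [h, ρ, hD.le])
    have ht' : t ≠ -ρ := fun h => ht (by simp [h, ρ, hD.le])
    rw [hball, Real.volume_Icc, ENNReal.toReal_ofReal', hsphere, finsum_mem_coe_finset,
      Finset.sum_filter, Finset.sum_pair (by linarith), abs_neg, abs_of_pos hρ]
    simp only [mem_Icc, Real.sq_lt]
    split_ifs <;> grind

section Line
variable {E : Type*} [NormedAddCommGroup E] [InnerProductSpace ℝ E] {p₀ u : E}

theorem inner_add_smul_of_inner_eq_zero (hp : ⟪p₀, u⟫ = 0) (hu : ‖u‖ = 1) (σ : ℝ) :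
    ⟪p₀ + σ • u, u⟫ = σ := by
  rw [inner_add_left, hp, real_inner_smul_left, real_inner_self_eq_norm_sq, hu]; ring

theorem norm_add_smul_sq_of_inner_eq_zero (hp : ⟪p₀, u⟫ = 0) (hu : ‖u‖ = 1) (σ : ℝ) :
    ‖p₀ + σ • u‖ ^ 2 = ‖p₀‖ ^ 2 + σ ^ 2 := by
  rw [norm_add_sq_real, real_inner_smul_right, hp, norm_smul, hu, Real.norm_eq_abs]; ring_nf; simp

variable [MeasurableSpace E] [BorelSpace E]

theorem toReal_hausdorffMeasure_segment_inter_closedBall_of_inner_eq_zero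
    (hp : ⟪p₀, u⟫ = 0) (hu : ‖u‖ = 1) {s t r : ℝ} (hst : s ≤ t) (hr : 0 ≤ r)
    (hs : ‖p₀ + s • u‖ ≠ r) (ht : ‖p₀ + t • u‖ ≠ r) :
    (μH[1] (segment ℝ (p₀ + s • u) (p₀ + t • u) ∩ Metric.closedBall 0 r)).toReal
      = (∑ᶠ q ∈ {q | q ∈ segment ℝ (p₀ + s • u) (p₀ + t • u) ∧ ‖q‖ = r},
          ⟪q, if 0 < ⟪q, u⟫ then u else -u⟫)
        + (if ‖p₀ + s • u‖ < r then ⟪p₀ + s • u, -u⟫ else 0)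
        + (if ‖p₀ + t • u‖ < r then ⟪p₀ + t • u, u⟫ else 0) := by
  set γ : ℝ →ᵃ[ℝ] E := AffineMap.lineMap p₀ (p₀ + u)
  have hγ (σ : ℝ) : γ σ = p₀ + σ • u := by
    simp [γ, AffineMap.lineMap_apply_module', add_comm]
  simp only [← hγ] at hs ht ⊢
  have hu0 : u ≠ 0 := norm_ne_zero_iff.mp (by rw [hu]; exact one_ne_zero)
  have hγinj : Function.Injective γ := AffineMap.lineMap_injective ℝ (by simpa using hu0)
  have hnorm_sq (σ : ℝ) : ‖γ σ‖ ^ 2 = σ ^ 2 + ‖p₀‖ ^ 2 := by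
    rw [hγ, norm_add_smul_sq_of_inner_eq_zero hp hu, add_comm]
  have hseg : segment ℝ (γ s) (γ t) = γ '' Icc s t := by
    rw [← image_segment, segment_eq_Icc hst]
  have hball : segment ℝ (γ s) (γ t) ∩ Metric.closedBall 0 r
      = γ '' {σ ∈ Icc s t | σ ^ 2 ≤ r ^ 2 - ‖p₀‖ ^ 2} := by
    rw [hseg, ← image_inter_preimage]
    congr 1; ext σ
    simp [le_sub_iff_add_le, ← hnorm_sq, sq_le_sq₀ (norm_nonneg _) hr]
  have hsphere : {q | q ∈ segment ℝ (γ s) (γ t) ∧ ‖q‖ = r}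
      = γ '' {σ ∈ Icc s t | σ ^ 2 = r ^ 2 - ‖p₀‖ ^ 2} := by
    change _ ∩ {q | ‖q‖ = r} = _
    rw [hseg, ← image_inter_preimage]
    congr 1; ext σ
    simp [eq_sub_iff_add_eq, ← hnorm_sq, sq_eq_sq₀ (norm_nonneg _) hr]
  have hlt (σ : ℝ) : ‖γ σ‖ < r ↔ σ ^ 2 < r ^ 2 - ‖p₀‖ ^ 2 := by
    rw [lt_sub_iff_add_lt, ← hnorm_sq, sq_lt_sq₀ (norm_nonneg _) hr]
  have hne (σ : ℝ) (h : ‖γ σ‖ ≠ r) : σ ^ 2 ≠ r ^ 2 - ‖p₀‖ ^ 2 := by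
    rwa [Ne, eq_sub_iff_add_eq, ← hnorm_sq, sq_eq_sq₀ (norm_nonneg _) hr]
  have hinner (σ : ℝ) : ⟪γ σ, u⟫ = σ := by rw [hγ, inner_add_smul_of_inner_eq_zero hp hu]
  have hcross (σ : ℝ) : ⟪γ σ, if 0 < σ then u else -u⟫ = |σ| := by
    split_ifs with hσ
    · rw [hinner, abs_of_pos hσ]
    · rw [inner_neg_right, hinner, abs_of_nonpos (not_lt.1 hσ)]
  have hnndist : nndist p₀ (p₀ + u) = 1 := by
    rw [← NNReal.coe_inj, coe_nndist, dist_self_add_right, hu, NNReal.coe_one]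
  rw [hball, hsphere, finsum_mem_image hγinj.injOn, hausdorffMeasure_lineMap_image, hnndist,
    one_smul, hausdorffMeasure_real, toReal_volume_Icc_sq_le hst (hne s hs) (hne t ht)]
  simp only [hlt, inner_neg_right, hinner, hcross]

theorem toReal_hausdorffMeasure_segment_inter_closedBall (a b : E) {r : ℝ} (hr : 0 ≤ r)
    (ha : ‖a‖ ≠ r) (hb : ‖b‖ ≠ r) :
    (μH[1] (segment ℝ a b ∩ Metric.closedBall 0 r)).toReal
      = (∑ᶠ q ∈ {q | q ∈ segment ℝ a b ∧ ‖q‖ = r},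
          ⟪q, if 0 < ⟪q, b - a⟫ then ‖b - a‖⁻¹ • (b - a) else ‖b - a‖⁻¹ • (a - b)⟫)
        + (if ‖a‖ < r then ⟪a, ‖a - b‖⁻¹ • (a - b)⟫ else 0)
        + (if ‖b‖ < r then ⟪b, ‖b - a‖⁻¹ • (b - a)⟫ else 0) := by
  rcases eq_or_ne a b with rfl | hab
  · rw [measure_mono_null inter_subset_left (by rw [hausdorffMeasure_segment, edist_self])]
    simp
  have hL : 0 < ‖b - a‖ := norm_pos_iff.2 (sub_ne_zero.2 hab.symm)
  set u := ‖b - a‖⁻¹ • (b - a) with hu_def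
  have hu : ‖u‖ = 1 := norm_smul_inv_norm (sub_ne_zero.2 hab.symm)
  have hba : b - a = ‖b - a‖ • u := (smul_inv_smul₀ hL.ne' _).symm
  have hinner_ba : ⟪b, u⟫ = ⟪a, u⟫ + ‖b - a‖ := by
    rw [← sub_eq_iff_eq_add', ← inner_sub_left, hu_def, real_inner_smul_right,
      real_inner_self_eq_norm_sq]
    field_simp
  set p₀ := a - ⟪a, u⟫ • u
  have hp : ⟪p₀, u⟫ = 0 := by
    rw [inner_sub_left, real_inner_smul_left, real_inner_self_eq_norm_sq, hu]; ring
  have ha' : p₀ + ⟪a, u⟫ • u = a := sub_add_cancel _ _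
  have hb' : p₀ + ⟪b, u⟫ • u = b := by
    rw [hinner_ba, add_smul, ← add_assoc, ha', ← hba, add_sub_cancel]
  have hneg : ‖b - a‖⁻¹ • (a - b) = -u := by rw [hu_def, ← smul_neg, neg_sub]
  have hpos (q : E) : 0 < ⟪q, b - a⟫ ↔ 0 < ⟪q, u⟫ := by
    rw [hba, real_inner_smul_right, mul_pos_iff_of_pos_left hL]
  have key := toReal_hausdorffMeasure_segment_inter_closedBall_of_inner_eq_zero hp hu
    (hinner_ba ▸ le_add_of_nonneg_right hL.le) hr (ha'.symm ▸ ha) (hb'.symm ▸ hb)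
  rw [ha', hb'] at key
  rw [key, norm_sub_rev a b, hneg]
  simp only [hpos]

end Line

namespace SimpleGraph
variable {V : Type*} [Fintype V] (G : SimpleGraph V) [DecidableRel G.Adj]

theorem sum_neighborFinset_comm {M : Type*} [AddCommMonoid M] (f : V → V → M) :
    ∑ x, ∑ y ∈ G.neighborFinset x, f x y = ∑ x, ∑ y ∈ G.neighborFinset x, f y x := by
  simp only [neighborFinset_eq_filter, Finset.sum_filter]
  rw [Finset.sum_comm]
  simp only [G.adj_comm]

theorem sum_inner_unit_sub_of_norm_lt_eq_zero {E : Type*} [NormedAddCommGroup E]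
    [InnerProductSpace ℝ E] (p : V → E) (hdeg1 : ∀ x, 1 ≤ G.degree x)
    (hbal : ∀ x, 2 ≤ G.degree x → ∑ y ∈ G.neighborFinset x, ‖p x - p y‖⁻¹ • (p x - p y) = 0)
    {r : ℝ} (hleaf : ∀ l, G.degree l = 1 → r < ‖p l‖) :
    ∑ x, ∑ y ∈ G.neighborFinset x,
      (if ‖p x‖ < r then ⟪p x, ‖p x - p y‖⁻¹ • (p x - p y)⟫ else 0) = 0 := by
  refine Finset.sum_eq_zero fun x _ => ?_
  by_cases hx : ‖p x‖ < r
  · have hdeg : 2 ≤ G.degree x := by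
      by_contra! h
      exact (hleaf x (by linarith [hdeg1 x])).not_gt hx
    simp only [hx, if_true, ← inner_sum, hbal x hdeg, inner_zero_right]
  · simp only [hx, if_false, Finset.sum_const_zero]

end SimpleGraph

theorem length_in_ball_eq_sum_crossings_general
    {k : ℕ} {V : Type*} [Fintype V]
    (G : SimpleGraph V) [DecidableRel G.Adj]
    (p : V → EuclideanSpace ℝ (Fin k))
    (hdeg1 : ∀ x : V, 1 ≤ G.degree x)
    (hbal : ∀ x : V, 2 ≤ G.degree x →
      ∑ y ∈ G.neighborFinset x, (‖p x - p y‖)⁻¹ • (p x - p y) = 0)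
    (r : ℝ) (hr : 0 < r)
    (hsphere : ∀ x : V, ‖p x‖ ≠ r)
    (hleafout : ∀ l : V, G.degree l = 1 → r < ‖p l‖) :
    (1 / 2 : ℝ) * ∑ x : V, ∑ y ∈ G.neighborFinset x,
        (μH[1] (segment ℝ (p x) (p y) ∩ Metric.closedBall (0 : EuclideanSpace ℝ (Fin k)) r)).toReal
      = (1 / 2 : ℝ) * ∑ x : V, ∑ y ∈ G.neighborFinset x,
          ∑ᶠ q ∈ {q : EuclideanSpace ℝ (Fin k) | q ∈ segment ℝ (p x) (p y) ∧ ‖q‖ = r},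
            ⟪q, if 0 < ⟪q, p y - p x⟫
                then (‖p y - p x‖)⁻¹ • (p y - p x)
                else (‖p y - p x‖)⁻¹ • (p x - p y)⟫ := by
  have hedge (x y : V) := toReal_hausdorffMeasure_segment_inter_closedBall (p x) (p y) hr.le
    (hsphere x) (hsphere y)
  simp only [hedge, Finset.sum_add_distrib]
  rw [← G.sum_neighborFinset_comm
      (fun x y => if ‖p x‖ < r then ⟪p x, ‖p x - p y‖⁻¹ • (p x - p y)⟫ else 0),
    G.sum_inner_unit_sub_of_norm_lt_eq_zero p hdeg1 hbal hleafout, add_zero, add_zero]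

/-- Let `(G, p)` be a finite critical net in `ℝ^k` satisfying the
balance condition, and let `r > 0` be a radius such that no vertex lies on the sphere
of radius `r`, every leaf lies outside the closed ball of radius `r`, and no edge is
tangent to the sphere of radius `r` at a crossing point.  Then the length (1-dimensional
Hausdorff measure) of the net inside the closed ball of radius `r` equals the sum, over
all points where an edge crosses the sphere, of the inner product of the crossing point
with the outward unit direction of the edge.  (Sums over unordered edges are written as
half the corresponding sums over ordered pairs of adjacent vertices.) -/
theorem length_in_ball_eq_sum_crossings
    {k : ℕ} (hk : 1 ≤ k) {V : Type*} [Fintype V] [DecidableEq V]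
    (G : SimpleGraph V) [DecidableRel G.Adj]
    (p : V → EuclideanSpace ℝ (Fin k)) (hinj : Function.Injective p)
    (hdeg1 : ∀ x : V, 1 ≤ G.degree x)
    (hnoLL : ∀ x y : V, G.Adj x y → ¬(G.degree x = 1 ∧ G.degree y = 1))
    (hbal : ∀ x : V, 2 ≤ G.degree x →
      ∑ y ∈ G.neighborFinset x, (‖p x - p y‖)⁻¹ • (p x - p y) = 0)
    (r : ℝ) (hr : 0 < r)
    (hsphere : ∀ x : V, ‖p x‖ ≠ r)
    (hleafout : ∀ l : V, G.degree l = 1 → r < ‖p l‖)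
    (htangent : ∀ x y : V, G.Adj x y → ∀ q ∈ segment ℝ (p x) (p y), ‖q‖ = r →
      ⟪q, p y - p x⟫ ≠ 0) :
    (1 / 2 : ℝ) * ∑ x : V, ∑ y ∈ G.neighborFinset x,
        (μH[1] (segment ℝ (p x) (p y) ∩ Metric.closedBall (0 : EuclideanSpace ℝ (Fin k)) r)).toReal
      = (1 / 2 : ℝ) * ∑ x : V, ∑ y ∈ G.neighborFinset x,
          ∑ᶠ q ∈ {q : EuclideanSpace ℝ (Fin k) | q ∈ segment ℝ (p x) (p y) ∧ ‖q‖ = r},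
            ⟪q, if 0 < ⟪q, p y - p x⟫
                then (‖p y - p x‖)⁻¹ • (p y - p x)
                else (‖p y - p x‖)⁻¹ • (p x - p y)⟫ :=
  length_in_ball_eq_sum_crossings_general G p hdeg1 hbal r hr hsphere hleafout
end
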